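/- arXiv:2108.01753 — 6 statements merged into one kernel-verified Lean document; each statement's English description precedes it below -/
import Mathlib

section
/- Assume p(s) > 0 for every s ∈ S. Let f be a valid deterministic padding scheme and let s, s' ∈ S satisfy n(s) < n(s') and f(s) > f(s'). Define f₁ to agree with f except f₁(s) = f(s'), and f₂ to agree with f except f₂(s') = f(s). Then f₁ and f₂ are both valid deterministic padding schemes, and min(H(f₁), H(f₂)) < H(f). -/
/-- `η(t) = -t·log₂ t` (note `Real.logb 2 0 = 0`, so `η 0 = 0`). -/
noncomputable def eta (t : ℝ) : ℝ := -(t * Real.logb 2 t)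

/-- A deterministic padding scheme `f` is valid if `n s ≤ f s ≤ c·n s` for all `s`. -/
def ValidDet {S : Type*} (n : S → ℕ) (c : ℝ) (f : S → ℕ) : Prop :=
  ∀ s, n s ≤ f s ∧ (f s : ℝ) ≤ c * (n s : ℝ)

/-- Padded-size entropy `H(f) = Σ_{y ∈ f(S)} η(Σ_{s : f s = y} p s)`. -/
noncomputable def Hent {S : Type*} [Fintype S] (p : S → ℝ) (f : S → ℕ) : ℝ :=
  ∑ y ∈ Finset.univ.image f, eta (∑ s ∈ Finset.univ.filter (fun s => f s = y), p s)

/-!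
Sending `s` to `f s'` (giving `f₁`) or `s'` to `f s` (giving `f₂`) changes only the masses
`A` of the fibre over `f s'` and `B` of the fibre over `f s`: to `A + p s, B - p s`, respectively
`A - p s', B + p s'`. Since `t ↦ η (A + t) + η (B - t)` is strictly concave on `[-A, B]` and `0`
lies strictly between `-p s'` and `p s`, its value `η A + η B` at `0` exceeds the smaller of its
two values at `p s` and `-p s'`. Both swaps are valid because `n s < n s' ≤ f s' < f s ≤ c n s`.
-/

open Finset Function

lemma eta_eq_negMulLog_div (t : ℝ) : eta t = Real.negMulLog t / Real.log 2 := by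
  unfold eta Real.negMulLog Real.logb; ring

lemma strictConcaveOn_eta : StrictConcaveOn ℝ (Set.Ici 0) eta := by
  refine ⟨convex_Ici 0, fun x hx y hy hxy a b ha hb hab => ?_⟩
  have h := Real.strictConcaveOn_negMulLog.2 hx hy hxy ha hb hab
  simp only [smul_eq_mul, eta_eq_negMulLog_div] at h ⊢
  rw [mul_div_assoc', mul_div_assoc', ← add_div]
  exact div_lt_div_of_pos_right h (Real.log_pos one_lt_two)

lemma StrictConcaveOn.comp_neg {s : Set ℝ} {g : ℝ → ℝ} (hg : StrictConcaveOn ℝ s g) :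
    StrictConcaveOn ℝ (-s) (g ∘ Neg.neg) :=
  ⟨hg.1.neg, fun x hx y hy hxy a b ha hb hab => by
    simpa [smul_neg, neg_add_rev, add_comm] using hg.2 hx hy (neg_injective.ne hxy) ha hb hab⟩

lemma strictConcaveOn_eta_transfer (A B : ℝ) :
    StrictConcaveOn ℝ (Set.Icc (-A) B) fun t => eta (A + t) + eta (B - t) := by
  have hA : StrictConcaveOn ℝ (Set.Icc (-A) B) fun t => eta (A + t) :=
    (strictConcaveOn_eta.translate_right A).subset
      (fun t ht => by simpa using ht.1) (convex_Icc _ _)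
  have hB : StrictConcaveOn ℝ (Set.Icc (-A) B) fun t => eta (B - t) :=
    (strictConcaveOn_eta.translate_right B).comp_neg.subset
      (fun t ht => by simpa using ht.2) (convex_Icc _ _)
  exact hA.add hB

lemma min_eta_transfer_lt {A B x y : ℝ} (hx : 0 < x) (hy : 0 < y) (hxB : x ≤ B) (hyA : y ≤ A) :
    min (eta (A + x) + eta (B - x)) (eta (A - y) + eta (B + y)) < eta A + eta B := by
  have h0 : (0 : ℝ) ∈ openSegment ℝ (-y) x := by
    rw [openSegment_eq_Ioo (by linarith)]
    exact ⟨by linarith, hx⟩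
  have h := (strictConcaveOn_eta_transfer A B).lt_on_openSegment
    ⟨by linarith, by linarith⟩ ⟨by linarith, hxB⟩ (by linarith) h0
  simpa [min_comm, sub_eq_add_neg] using h

section FiberMass

variable {S β : Type*} [Fintype S] [DecidableEq β]

def fiberMass (p : S → ℝ) (f : S → β) (y : β) : ℝ :=
  ∑ s ∈ univ.filter (fun s => f s = y), p s

lemma fiberMass_update_add [DecidableEq S] (p : S → ℝ) (f : S → β) (s : S) (b y : β) :
    fiberMass p (update f s b) y + (if f s = y then p s else 0) =
      fiberMass p f y + (if b = y then p s else 0) := by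
  simp only [fiberMass, sum_filter]
  rw [← add_sum_erase _ _ (mem_univ s), ← add_sum_erase _ _ (mem_univ s), update_self]
  have hrest : ∑ t ∈ univ.erase s, (if update f s b t = y then p t else 0) =
      ∑ t ∈ univ.erase s, (if f t = y then p t else 0) :=
    sum_congr rfl fun t ht => by rw [update_of_ne (ne_of_mem_erase ht)]
  rw [hrest]
  ring

lemma single_le_fiberMass {p : S → ℝ} (hp : ∀ s, 0 ≤ p s) (f : S → β) (s : S) :
    p s ≤ fiberMass p f (f s) :=
  single_le_sum (fun t _ => hp t) (by simp)

end FiberMass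

section Entropy

variable {S : Type*} [Fintype S]

lemma Hent_eq_sum_of_image_subset (p : S → ℝ) {g : S → ℕ} {T : Finset ℕ}
    (hT : univ.image g ⊆ T) : Hent p g = ∑ y ∈ T, eta (fiberMass p g y) := by
  refine sum_subset hT fun y _ hy => ?_
  have hempty : univ.filter (fun s => g s = y) = ∅ :=
    filter_eq_empty_iff.2 fun s _ hs => hy (hs ▸ mem_image_of_mem g (mem_univ s))
  simp [hempty, eta]

lemma Hent_update_add [DecidableEq S] (p : S → ℝ) (f : S → ℕ) {s t : S} (h : f t ≠ f s) :
    Hent p (update f s (f t)) + (eta (fiberMass p f (f s)) + eta (fiberMass p f (f t))) =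
      Hent p f + (eta (fiberMass p f (f s) - p s) + eta (fiberMass p f (f t) + p s)) := by
  have hmass := fiberMass_update_add p f s (f t)
  set g := update f s (f t)
  have hs : fiberMass p g (f s) = fiberMass p f (f s) - p s := by
    simpa [h, eq_sub_iff_add_eq] using hmass (f s)
  have ht : fiberMass p g (f t) = fiberMass p f (f t) + p s := by
    simpa [h.symm] using hmass (f t)
  have hsub : univ.image g ⊆ univ.image f := by
    intro y hy
    obtain ⟨u, -, rfl⟩ := mem_image.1 hy
    rcases eq_or_ne u s with rfl | hu
    · simp [g]
    · simp [g, update_of_ne hu]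
  have hdiff : ∑ y ∈ univ.image f, (eta (fiberMass p g y) - eta (fiberMass p f y)) =
      (eta (fiberMass p g (f s)) - eta (fiberMass p f (f s))) +
        (eta (fiberMass p g (f t)) - eta (fiberMass p f (f t))) :=
    sum_eq_add_of_mem (f s) (f t) (by simp) (by simp) h.symm fun y _ ⟨hys, hyt⟩ => by
      simpa [hys.symm, hyt.symm, sub_eq_zero] using congrArg eta (hmass y)
  rw [sum_sub_distrib, ← Hent_eq_sum_of_image_subset p hsub,
    ← Hent_eq_sum_of_image_subset p subset_rfl, hs, ht] at hdiff
  linarith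

end Entropy

lemma ValidDet.update {S : Type*} [DecidableEq S] {n : S → ℕ} {c : ℝ} {f : S → ℕ}
    (hf : ValidDet n c f) {s : S} {b : ℕ} (hlo : n s ≤ b) (hhi : (b : ℝ) ≤ c * n s) :
    ValidDet n c (update f s b) := by
  intro t
  rcases eq_or_ne t s with rfl | ht
  · simpa using ⟨hlo, hhi⟩
  · simpa [update_of_ne ht] using hf t

theorem stmt_2_general {S : Type*} [Fintype S] [DecidableEq S]
    (n : S → ℕ)
    (p : S → ℝ) (hp : ∀ s, 0 < p s)
    (c : ℝ)
    (f : S → ℕ) (hf : ValidDet n c f)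
    (s s' : S) (hss' : n s < n s') (hff : f s' < f s)
    (f₁ f₂ : S → ℕ)
    (hf₁ : f₁ = Function.update f s (f s'))
    (hf₂ : f₂ = Function.update f s' (f s)) :
    ValidDet n c f₁ ∧ ValidDet n c f₂ ∧
      min (Hent p f₁) (Hent p f₂) < Hent p f := by
  subst hf₁ hf₂
  have hfs : (0 : ℝ) < f s := Nat.cast_pos.2 ((Nat.zero_le _).trans_lt hff)
  have hc : 0 < c := pos_of_mul_pos_left (hfs.trans_le (hf s).2) (Nat.cast_nonneg _)
  refine ⟨hf.update (hss'.le.trans (hf s').1) ((Nat.cast_le.2 hff.le).trans (hf s).2),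
    hf.update ((hf s').1.trans hff.le) ((hf s).2.trans (by gcongr)), ?_⟩
  have h₁ := Hent_update_add p f hff.ne
  have h₂ := Hent_update_add p f hff.ne'
  have hmass (t : S) := single_le_fiberMass (fun u => (hp u).le) f t
  rcases min_lt_iff.1 (min_eta_transfer_lt (hp s) (hp s') (hmass s) (hmass s')) with h | h
  exacts [min_lt_iff.2 (.inl (by linarith)), min_lt_iff.2 (.inr (by linarith))]

/-- if `f` is valid with `n s < n s'` but `f s > f s'`, then both swaps
`f₁` and `f₂` are valid and one of them strictly decreases the padded-size entropy. -/
theorem stmt_2 {S : Type*} [Fintype S] [DecidableEq S] [Nonempty S]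
    (n : S → ℕ) (hn : ∀ s, 1 ≤ n s)
    (p : S → ℝ) (hp : ∀ s, 0 < p s) (hsum : ∑ s, p s = 1)
    (c : ℝ) (hc : 1 ≤ c)
    (f : S → ℕ) (hf : ValidDet n c f)
    (s s' : S) (hss' : n s < n s') (hff : f s' < f s)
    (f₁ f₂ : S → ℕ)
    (hf₁ : f₁ = Function.update f s (f s'))
    (hf₂ : f₂ = Function.update f s' (f s)) :
    ValidDet n c f₁ ∧ ValidDet n c f₂ ∧
      min (Hent p f₁) (Hent p f₂) < Hent p f :=
  stmt_2_general n p hp c f hf s s' hss' hff f₁ f₂ hf₁ hf₂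
end

section
/- Assume p(s) > 0 for every s ∈ S, let N = |S|, and let σ : {1,…,N} → S be a bijection with n(σ(k)) ≤ n(σ(k+1)) for all 1 ≤ k < N. Define OPT : {0,1,…,N} → ℝ recursively by OPT(0) = 0 and, for 1 ≤ j ≤ N, OPT(j) = min over those i ∈ {1,…,j} with n(σ(j)) ≤ c·n(σ(i)) of OPT(i−1) + η(Σ_{k=i}^{j} p(σ(k))) (this minimum is over a nonempty set since i = j always qualifies, c ≥ 1). Then OPT(N) equals the minimum of H(f) over all valid deterministic padding schemes f. -/
lemma eta_eq : eta = fun t => (1 / Real.log 2) * Real.negMulLog t := by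
  funext t
  simp [eta, Real.negMulLog, Real.logb, div_eq_mul_inv]
  ring

lemma eta_zero : eta 0 = 0 := by simp [eta]

lemma eta_nonneg {t : ℝ} (h0 : 0 ≤ t) (h1 : t ≤ 1) : 0 ≤ eta t := by
  rw [eta_eq]
  have := Real.negMulLog_nonneg h0 h1
  have h2 : (0:ℝ) < Real.log 2 := Real.log_pos (by norm_num)
  positivity

lemma eta_concaveOn : ConcaveOn ℝ (Set.Ici (0:ℝ)) eta := by
  rw [eta_eq]
  have h2 : (0:ℝ) ≤ 1 / Real.log 2 := by
    have := Real.log_pos (show (1:ℝ) < 2 by norm_num); positivity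
  simpa using Real.concaveOn_negMulLog.smul h2

lemma eta_subadd {a b : ℝ} (ha : 0 ≤ a) (hb : 0 ≤ b) : eta (a + b) ≤ eta a + eta b := by
  rcases eq_or_lt_of_le ha with h | h
  · simp [← h, eta_zero]
  rcases eq_or_lt_of_le hb with h' | h'
  · simp [← h', eta_zero]
  have key : ∀ x y : ℝ, 0 < x → 0 < y → -(x * Real.logb 2 (x + y)) ≤ -(x * Real.logb 2 x) := by
    intro x y hx hy
    have : Real.logb 2 x ≤ Real.logb 2 (x + y) :=
      Real.logb_le_logb_of_le (by norm_num) hx (by linarith)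
    nlinarith
  have k1 := key a b h h'
  have k2 := key b a h' h
  have : eta (a + b) = -(a * Real.logb 2 (a+b)) + -(b * Real.logb 2 (a+b)) := by
    simp [eta]; ring
  rw [this, eta, eta]
  have : b + a = a + b := by ring
  rw [this] at k2
  linarith

lemma eta_exchange {u v tA tB : ℝ} (hu : 0 ≤ u) (hv : 0 ≤ v) (htA : 0 ≤ tA) (htB : 0 ≤ tB)
    (hAv : tA ≤ v) (hBu : tB ≤ u) :
    min (eta (u + tA) + eta (v - tA)) (eta (u - tB) + eta (v + tB)) ≤ eta u + eta v := by
  rcases eq_or_lt_of_le (by linarith : (0:ℝ) ≤ tA + tB) with h | h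
  · have h1 : tA = 0 := by linarith
    have h2 : tB = 0 := by linarith
    simp [h1, h2]
  set l : ℝ := tB / (tA + tB) with hl
  have hl0 : 0 ≤ l := by positivity
  have hne : tA + tB ≠ 0 := ne_of_gt h
  have hl1 : 1 - l = tA / (tA + tB) := by
    rw [hl, eq_div_iff hne, sub_mul, div_mul_cancel₀ _ hne]; ring
  have hl1' : 0 ≤ 1 - l := by rw [hl1]; positivity
  have hsum : l + (1 - l) = 1 := by ring
  have hcu : l • (u + tA) + (1 - l) • (u - tB) = u := by
    rw [hl1, smul_eq_mul, smul_eq_mul, hl]; field_simp; ring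
  have hcv : l • (v - tA) + (1 - l) • (v + tB) = v := by
    rw [hl1, smul_eq_mul, smul_eq_mul, hl]; field_simp; ring
  have c1 := eta_concaveOn.2 (Set.mem_Ici.2 (by linarith : (0:ℝ) ≤ u + tA))
    (Set.mem_Ici.2 (by linarith : (0:ℝ) ≤ u - tB)) hl0 hl1' hsum
  have c2 := eta_concaveOn.2 (Set.mem_Ici.2 (by linarith : (0:ℝ) ≤ v - tA))
    (Set.mem_Ici.2 (by linarith : (0:ℝ) ≤ v + tB)) hl0 hl1' hsum
  rw [hcu] at c1
  rw [hcv] at c2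
  have hmin1 : min (eta (u + tA) + eta (v - tA)) (eta (u - tB) + eta (v + tB)) ≤ eta (u+tA) + eta (v-tA) := min_le_left _ _
  have hmin2 : min (eta (u + tA) + eta (v - tA)) (eta (u - tB) + eta (v + tB)) ≤ eta (u-tB) + eta (v+tB) := min_le_right _ _
  set M := min (eta (u + tA) + eta (v - tA)) (eta (u - tB) + eta (v + tB))
  have : l • M + (1-l) • M ≤ eta u + eta v := by
    calc l • M + (1-l) • M ≤ l • (eta (u+tA) + eta (v-tA)) + (1-l) • (eta (u-tB) + eta (v+tB)) := by
          apply add_le_add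
          · exact smul_le_smul_of_nonneg_left hmin1 hl0
          · exact smul_le_smul_of_nonneg_left hmin2 hl1'
      _ = (l • eta (u+tA) + (1-l) • eta (u-tB)) + (l • eta (v-tA) + (1-l) • eta (v+tB)) := by
          simp [smul_eq_mul]; ring
      _ ≤ eta u + eta v := add_le_add c1 c2
  calc M = l • M + (1-l) • M := by rw [smul_eq_mul, smul_eq_mul]; ring
    _ ≤ eta u + eta v := this

/- index world -/
def VldI (m : ℕ → ℕ) (c : ℝ) (j : ℕ) (b : ℕ → ℕ) : Prop :=
  ∀ k, 1 ≤ k → k ≤ j → m k ≤ b k ∧ (b k : ℝ) ≤ c * m k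

noncomputable def MassI (q : ℕ → ℝ) (j : ℕ) (b : ℕ → ℕ) (y : ℕ) : ℝ :=
  ∑ k ∈ Finset.Icc 1 j, if b k = y then q k else 0

noncomputable def HHI (q : ℕ → ℝ) (j : ℕ) (b : ℕ → ℕ) : ℝ :=
  ∑ y ∈ (Finset.Icc 1 j).image b, eta (MassI q j b y)

def CPI (N : ℕ) (b : ℕ → ℕ) : Finset (ℕ × ℕ) :=
  ((Finset.Icc 1 N ×ˢ Finset.Icc 1 N).filter fun r => r.1 < r.2 ∧ b r.2 < b r.1).image
    fun r => (b r.2, b r.1)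

def SortedI (j : ℕ) (b : ℕ → ℕ) : Prop := ∀ k k', 1 ≤ k → k ≤ k' → k' ≤ j → b k ≤ b k'

lemma mem_CPI {N : ℕ} {b : ℕ → ℕ} {z w : ℕ} :
    (z, w) ∈ CPI N b ↔ ∃ a d, (1 ≤ a ∧ a ≤ N) ∧ (1 ≤ d ∧ d ≤ N) ∧ a < d ∧
      b a = w ∧ b d = z ∧ z < w := by
  constructor
  · intro h
    simp only [CPI, Finset.mem_image, Finset.mem_filter, Finset.mem_product,
      Finset.mem_Icc] at h
    obtain ⟨⟨a, d⟩, ⟨⟨ha, hd⟩, hlt, hv⟩, heq⟩ := h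
    simp only [Prod.mk.injEq] at heq
    obtain ⟨hz, hw⟩ := heq
    exact ⟨a, d, ha, hd, hlt, hw, hz, hz ▸ hw ▸ hv⟩
  · rintro ⟨a, d, ha, hd, hlt, hba, hbd, hzw⟩
    simp only [CPI, Finset.mem_image, Finset.mem_filter, Finset.mem_product, Finset.mem_Icc]
    exact ⟨(a, d), ⟨⟨ha, hd⟩, hlt, by simp only; rw [hba, hbd]; exact hzw⟩, by simp [hba, hbd]⟩

lemma sorted_of_CPI_empty {N : ℕ} {b : ℕ → ℕ} (h : CPI N b = ∅) : SortedI N b := by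
  intro k k' hk hkk' hk'
  by_contra hlt
  push_neg at hlt
  have hkk : k < k' := lt_of_le_of_ne hkk' (by rintro rfl; exact lt_irrefl _ hlt)
  have : (b k', b k) ∈ CPI N b :=
    mem_CPI.2 ⟨k, k', ⟨hk, by omega⟩, ⟨by omega, hk'⟩, hkk, rfl, rfl, hlt⟩
  rw [h] at this
  exact absurd this (Finset.notMem_empty _)

lemma MassI_nonneg {q : ℕ → ℝ} (hq : ∀ k, 0 ≤ q k) (j : ℕ) (b : ℕ → ℕ) (y : ℕ) :
    0 ≤ MassI q j b y := by
  apply Finset.sum_nonneg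
  intro k _
  split <;> simp [hq k]

lemma MassI_eq_zero {q : ℕ → ℝ} {j : ℕ} {b : ℕ → ℕ} {y : ℕ}
    (h : y ∉ (Finset.Icc 1 j).image b) : MassI q j b y = 0 := by
  apply Finset.sum_eq_zero
  intro k hk
  rw [if_neg]
  intro hby
  exact h (Finset.mem_image.2 ⟨k, hk, hby⟩)

lemma HHI_congr {q : ℕ → ℝ} {j : ℕ} {b b' : ℕ → ℕ}
    (h : ∀ k ∈ Finset.Icc 1 j, b k = b' k) : HHI q j b = HHI q j b' := by
  have himg : (Finset.Icc 1 j).image b = (Finset.Icc 1 j).image b' :=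
    Finset.image_congr h
  have hmass : ∀ y, MassI q j b y = MassI q j b' y := by
    intro y
    apply Finset.sum_congr rfl
    intro k hk
    rw [h k hk]
  rw [HHI, HHI, himg]
  exact Finset.sum_congr rfl fun y _ => by rw [hmass]

lemma HHI_eq_sum_subset {q : ℕ → ℝ} {j : ℕ} {b : ℕ → ℕ} {Y : Finset ℕ}
    (h : (Finset.Icc 1 j).image b ⊆ Y) :
    HHI q j b = ∑ y ∈ Y, eta (MassI q j b y) := by
  rw [HHI]
  apply Finset.sum_subset h
  intro y _ hy
  rw [MassI_eq_zero hy, eta_zero]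

lemma two_erase_sum {s : Finset ℕ} (F : ℕ → ℝ) {w₁ w₂ : ℕ} (h1 : w₁ ∈ s) (h2 : w₂ ∈ s)
    (hne : w₁ ≠ w₂) :
    ∑ y ∈ s, F y = (∑ y ∈ (s.erase w₁).erase w₂, F y) + F w₁ + F w₂ := by
  have h2' : w₂ ∈ s.erase w₁ := Finset.mem_erase.2 ⟨hne.symm, h2⟩
  rw [← Finset.sum_erase_add s F h1, ← Finset.sum_erase_add (s.erase w₁) F h2']
  ring

/- the move -/
def mvI (b : ℕ → ℕ) (w₁ w₂ : ℕ) (P : ℕ → Prop) [DecidablePred P] : ℕ → ℕ :=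
  fun k => if b k = w₁ ∧ P k then w₂ else b k

section mv
variable {b : ℕ → ℕ} {w₁ w₂ : ℕ} {P : ℕ → Prop} [DecidablePred P] (hne : w₁ ≠ w₂)

lemma mvI_eq_other {z : ℕ} (hz1 : z ≠ w₁) (hz2 : z ≠ w₂) (k : ℕ) :
    mvI b w₁ w₂ P k = z ↔ b k = z := by
  unfold mvI; split
  · rename_i hc
    constructor
    · intro h; exact absurd h.symm hz2
    · intro h; exact absurd (hc.1.symm.trans h).symm hz1
  · rfl

lemma mvI_eq_target (k : ℕ) :
    mvI b w₁ w₂ P k = w₂ ↔ (b k = w₂ ∨ (b k = w₁ ∧ P k)) := by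
  unfold mvI; split
  · rename_i hcond
    simp only [true_iff]
    exact Or.inr hcond
  · rename_i hcond
    constructor
    · exact Or.inl
    · rintro (h | h)
      · exact h
      · exact absurd h hcond

include hne in
lemma mvI_eq_source (k : ℕ) :
    mvI b w₁ w₂ P k = w₁ ↔ (b k = w₁ ∧ ¬ P k) := by
  unfold mvI; split
  · rename_i hcond
    constructor
    · intro h; exact absurd h.symm hne
    · rintro ⟨_, h⟩; exact absurd hcond.2 h
  · rename_i hcond
    constructor
    · intro h
      refine ⟨h, fun hP => hcond ⟨h, hP⟩⟩
    · exact And.left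

variable (q : ℕ → ℝ) (j : ℕ)

include hne in
lemma MassI_mvI_target :
    MassI q j (mvI b w₁ w₂ P) w₂ =
      MassI q j b w₂ + ∑ k ∈ Finset.Icc 1 j, if b k = w₁ ∧ P k then q k else 0 := by
  unfold MassI
  rw [← Finset.sum_add_distrib]
  apply Finset.sum_congr rfl
  intro k _
  by_cases h : b k = w₁ ∧ P k
  · rw [if_pos ((mvI_eq_target k).2 (Or.inr h)), if_pos h,
      if_neg (fun hw => hne (h.1.symm.trans hw)), zero_add]
  · have : mvI b w₁ w₂ P k = b k := if_neg h
    rw [this, if_neg h, add_zero]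

include hne in
lemma MassI_mvI_source :
    MassI q j (mvI b w₁ w₂ P) w₁ =
      MassI q j b w₁ - ∑ k ∈ Finset.Icc 1 j, if b k = w₁ ∧ P k then q k else 0 := by
  unfold MassI
  rw [eq_sub_iff_add_eq, ← Finset.sum_add_distrib]
  apply Finset.sum_congr rfl
  intro k _
  by_cases h : b k = w₁ ∧ P k
  · rw [if_neg, if_pos h, if_pos h.1, zero_add]
    rw [mvI_eq_source hne]
    rintro ⟨_, hnP⟩; exact hnP h.2
  · have heq : mvI b w₁ w₂ P k = b k := if_neg h
    rw [heq, if_neg h, add_zero]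

lemma MassI_mvI_other {z : ℕ} (hz1 : z ≠ w₁) (hz2 : z ≠ w₂) :
    MassI q j (mvI b w₁ w₂ P) z = MassI q j b z := by
  unfold MassI
  apply Finset.sum_congr rfl
  intro k _
  exact if_congr (mvI_eq_other hz1 hz2 k) rfl rfl

lemma image_mvI_subset (hw₂ : w₂ ∈ (Finset.Icc 1 j).image b) :
    (Finset.Icc 1 j).image (mvI b w₁ w₂ P) ⊆ (Finset.Icc 1 j).image b := by
  intro z hz
  obtain ⟨k, hk, hbk⟩ := Finset.mem_image.1 hz
  unfold mvI at hbk
  split at hbk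
  · exact hbk ▸ hw₂
  · exact Finset.mem_image.2 ⟨k, hk, hbk⟩

end mv

lemma CPI_A_dec {N : ℕ} {b : ℕ → ℕ} {y y' M : ℕ}
    (hyy' : (y, y') ∈ CPI N b)
    (hM : 1 ≤ M ∧ M ≤ N) (hbM : b M = y)
    (hMmax : ∀ k, 1 ≤ k → k ≤ N → b k = y → k ≤ M) :
    (CPI N (mvI b y' y (· < M))).card < (CPI N b).card := by
  obtain ⟨a₀, d₀, _, _, _, _, _, hylt⟩ := mem_CPI.1 hyy'
  set bA := mvI b y' y (· < M) with hbAdef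
  have hne : y' ≠ y := (ne_of_lt hylt).symm
  have hTgt : ∀ k, bA k = y ↔ (b k = y ∨ (b k = y' ∧ k < M)) := fun k => mvI_eq_target k
  have hSrc : ∀ k, bA k = y' ↔ (b k = y' ∧ ¬ k < M) := fun k => mvI_eq_source hne k
  have hOth : ∀ (z k : ℕ), z ≠ y' → z ≠ y → (bA k = z ↔ b k = z) :=
    fun z k hz1 hz2 => mvI_eq_other hz1 hz2 k
  have hnotA : (y, y') ∉ CPI N bA := by
    rw [mem_CPI]
    rintro ⟨a, d, ha, hd, had, hba, hbd, -⟩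
    rw [hSrc] at hba
    rw [hTgt] at hbd
    have haM : M < a := by
      rcases Nat.lt_or_ge a M with h | h
      · exact absurd h hba.2
      · rcases Nat.eq_or_lt_of_le h with h' | h'
        · exfalso; rw [h'] at hbM; exact hne (hba.1.symm.trans hbM)
        · exact h'
    rcases hbd with h1 | h2
    · have := hMmax d hd.1 hd.2 h1; omega
    · omega
  have hmain : (CPI N bA).card ≤ ((CPI N b).erase (y, y')).card := by
    apply Finset.card_le_card_of_injOn
      (fun p => if p.2 = y ∧ p ∉ CPI N b then (p.1, y') else p)
    · rintro ⟨z, w⟩ hp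
      rw [Finset.mem_coe] at hp ⊢
      beta_reduce
      have hp' := hp
      rw [mem_CPI] at hp'
      obtain ⟨a, d, ha, hd, had, hba, hbd, hzw⟩ := hp'
      by_cases hcase : (z, w).2 = y ∧ (z, w) ∉ CPI N b
      · rw [if_pos hcase]
        have hw' : y = w := hcase.1.symm
        have hnot : (z, w) ∉ CPI N b := hcase.2
        subst hw'
        have hz1 : z ≠ y' := by omega
        have hz2 : z ≠ y := by omega
        have hbd' : b d = z := (hOth z d hz1 hz2).1 hbd
        rw [hTgt] at hba
        rcases hba with h1 | h2
        · exact absurd (mem_CPI.2 ⟨a, d, ha, hd, had, h1, hbd', hzw⟩) hnot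
        · refine Finset.mem_erase.2
            ⟨?_, mem_CPI.2 ⟨a, d, ha, hd, had, h2.1, hbd', by omega⟩⟩
          intro he
          rw [Prod.mk.injEq] at he
          exact hz2 he.1
      · rw [if_neg hcase]
        refine Finset.mem_erase.2 ⟨?_, ?_⟩
        · rintro he
          rw [he] at hp
          exact hnotA hp
        · push_neg at hcase
          by_cases hwy : w = y
          · exact hcase hwy
          · by_cases hwy' : w = y'
            · have hwy'' : y' = w := hwy'.symm
              subst hwy''
              rw [hSrc] at hba
              have hzy : z ≠ y := by
                rintro rfl; exact hnotA hp
              have hz2 : z ≠ y' := by omega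
              have hbd' : b d = z := (hOth z d hz2 hzy).1 hbd
              exact mem_CPI.2 ⟨a, d, ha, hd, had, hba.1, hbd', hzw⟩
            · have hba' : b a = w := (hOth w a hwy' hwy).1 hba
              by_cases hzy : z = y
              · have hzy2 : y = z := hzy.symm
                subst hzy2
                rw [hTgt] at hbd
                rcases hbd with h1 | h2
                · exact mem_CPI.2 ⟨a, d, ha, hd, had, hba', h1, hzw⟩
                · exact mem_CPI.2 ⟨a, M, ha, hM, by omega, hba', hbM, hzw⟩
              · by_cases hzy' : z = y'
                · have hzy2 : y' = z := hzy'.symm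
                  subst hzy2
                  rw [hSrc] at hbd
                  exact mem_CPI.2 ⟨a, d, ha, hd, had, hba', hbd.1, hzw⟩
                · exact mem_CPI.2 ⟨a, d, ha, hd, had, hba', (hOth z d hzy' hzy).1 hbd, hzw⟩
    · rintro ⟨z1, w1⟩ hp1 ⟨z2, w2⟩ hp2 heq
      simp only [Finset.coe_mem, Finset.mem_coe] at hp1 hp2
      have hreroute : ∀ z1' w1' z2' w2', (z1', w1') ∈ CPI N bA → (z2', w2') ∈ CPI N bA →
          ((z1', w1').2 = y ∧ (z1', w1') ∉ CPI N b) →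
          ¬ ((z2', w2').2 = y ∧ (z2', w2') ∉ CPI N b) →
          (z1', y') = (z2', w2') → False := by
        rintro z1' w1' z2' w2' hq1 hq2 hr1 hr2 he
        rw [Prod.mk.injEq] at he
        obtain ⟨he1, he2⟩ := he
        subst he1
        subst he2
        have hw1 : y = w1' := hr1.1.symm
        subst hw1
        obtain ⟨_, _, _, _, _, _, _, hz1y⟩ := mem_CPI.1 hq1  -- z1' < y
        obtain ⟨a', d', ha', hd', had', hba', hbd', _⟩ := mem_CPI.1 hq2
        rw [hSrc] at hba'
        have haM : M < a' := by
          rcases Nat.lt_or_ge a' M with h | h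
          · exact absurd h hba'.2
          · rcases Nat.eq_or_lt_of_le h with h' | h'
            · exfalso; rw [h'] at hbM; exact hne (hba'.1.symm.trans hbM)
            · exact h'
        have hz1' : z1' ≠ y' := by omega
        have hz2' : z1' ≠ y := by omega
        have hbd'' : b d' = z1' := (hOth z1' d' hz1' hz2').1 hbd'
        exact hr1.2 (mem_CPI.2 ⟨M, d', hM, hd', by omega, hbM, hbd'', hz1y⟩)
      simp only at heq
      by_cases h1 : (z1, w1).2 = y ∧ (z1, w1) ∉ CPI N b <;>
        by_cases h2 : (z2, w2).2 = y ∧ (z2, w2) ∉ CPI N b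
      · rw [if_pos h1, if_pos h2] at heq
        rw [Prod.mk.injEq] at heq
        rw [Prod.mk.injEq]
        exact ⟨heq.1, h1.1.trans h2.1.symm⟩
      · rw [if_pos h1, if_neg h2] at heq
        exact absurd heq (by intro he; exact hreroute z1 w1 z2 w2 hp1 hp2 h1 h2 he)
      · rw [if_neg h1, if_pos h2] at heq
        exact absurd heq.symm (by intro he; exact hreroute z2 w2 z1 w1 hp2 hp1 h2 h1 he)
      · rw [if_neg h1, if_neg h2] at heq
        exact heq
  calc (CPI N bA).card ≤ ((CPI N b).erase (y, y')).card := hmain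
    _ < (CPI N b).card := Finset.card_erase_lt_of_mem hyy'
lemma CPI_B_dec {N : ℕ} {b : ℕ → ℕ} {y y' m' : ℕ}
    (hyy' : (y, y') ∈ CPI N b)
    (hm' : 1 ≤ m' ∧ m' ≤ N) (hbm' : b m' = y')
    (hm'min : ∀ k, 1 ≤ k → k ≤ N → b k = y' → m' ≤ k) :
    (CPI N (mvI b y y' (m' < ·))).card < (CPI N b).card := by
  obtain ⟨a₀, d₀, _, _, _, _, _, hylt⟩ := mem_CPI.1 hyy'
  set bB := mvI b y y' (m' < ·) with hbBdef
  have hne : y ≠ y' := ne_of_lt hylt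
  have hTgt : ∀ k, bB k = y' ↔ (b k = y' ∨ (b k = y ∧ m' < k)) := fun k => mvI_eq_target k
  have hSrc : ∀ k, bB k = y ↔ (b k = y ∧ ¬ m' < k) := fun k => mvI_eq_source hne k
  have hOth : ∀ (z k : ℕ), z ≠ y → z ≠ y' → (bB k = z ↔ b k = z) :=
    fun z k hz1 hz2 => mvI_eq_other hz1 hz2 k
  have hnotB : (y, y') ∉ CPI N bB := by
    rw [mem_CPI]
    rintro ⟨a, d, ha, hd, had, hba, hbd, -⟩
    rw [hSrc] at hbd
    rw [hTgt] at hba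
    have hdm : d < m' := by
      rcases Nat.lt_or_ge d m' with h | h
      · exact h
      · rcases Nat.eq_or_lt_of_le h with h' | h'
        · exfalso; rw [h'] at hbm'; exact hne (hbd.1.symm.trans hbm')
        · exact absurd h' hbd.2
    rcases hba with h1 | h2
    · have := hm'min a ha.1 ha.2 h1; omega
    · omega
  have hmain : (CPI N bB).card ≤ ((CPI N b).erase (y, y')).card := by
    apply Finset.card_le_card_of_injOn
      (fun p => if p.1 = y' ∧ p ∉ CPI N b then (y, p.2) else p)
    · rintro ⟨z, w⟩ hp
      rw [Finset.mem_coe] at hp ⊢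
      beta_reduce
      have hp' := hp
      rw [mem_CPI] at hp'
      obtain ⟨a, d, ha, hd, had, hba, hbd, hzw⟩ := hp'
      by_cases hcase : (z, w).1 = y' ∧ (z, w) ∉ CPI N b
      · rw [if_pos hcase]
        have hz' : y' = z := hcase.1.symm
        have hnot : (z, w) ∉ CPI N b := hcase.2
        subst hz'
        have hw1 : w ≠ y := by omega
        have hw2 : w ≠ y' := by omega
        have hba' : b a = w := (hOth w a hw1 hw2).1 hba
        rw [hTgt] at hbd
        rcases hbd with h1 | h2
        · exact absurd (mem_CPI.2 ⟨a, d, ha, hd, had, hba', h1, hzw⟩) hnot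
        · refine Finset.mem_erase.2
            ⟨?_, mem_CPI.2 ⟨a, d, ha, hd, had, hba', h2.1, by omega⟩⟩
          intro he
          rw [Prod.mk.injEq] at he
          exact hw2 he.2
      · rw [if_neg hcase]
        refine Finset.mem_erase.2 ⟨?_, ?_⟩
        · rintro he
          rw [he] at hp
          exact hnotB hp
        · push_neg at hcase
          by_cases hzy' : z = y'
          · exact hcase hzy'
          · by_cases hwy' : w = y'
            · have hwy'' : y' = w := hwy'.symm
              subst hwy''
              have hzy : z ≠ y := by
                rintro rfl; exact hnotB hp
              have hbd' : b d = z := (hOth z d hzy hzy').1 hbd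
              rw [hTgt] at hba
              rcases hba with h1 | h2
              · exact mem_CPI.2 ⟨a, d, ha, hd, had, h1, hbd', hzw⟩
              · exact mem_CPI.2 ⟨m', d, hm', hd, by omega, hbm', hbd', hzw⟩
            · by_cases hwy : w = y
              · have hwy2 : y = w := hwy.symm
                subst hwy2
                rw [hSrc] at hba
                have hz2 : z ≠ y := by omega
                have hbd' : b d = z := (hOth z d hz2 hzy').1 hbd
                exact mem_CPI.2 ⟨a, d, ha, hd, had, hba.1, hbd', hzw⟩
              · have hba' : b a = w := (hOth w a hwy hwy').1 hba
                by_cases hzy : z = y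
                · have hzy2 : y = z := hzy.symm
                  subst hzy2
                  rw [hSrc] at hbd
                  exact mem_CPI.2 ⟨a, d, ha, hd, had, hba', hbd.1, hzw⟩
                · exact mem_CPI.2 ⟨a, d, ha, hd, had, hba', (hOth z d hzy hzy').1 hbd, hzw⟩
    · rintro ⟨z1, w1⟩ hp1 ⟨z2, w2⟩ hp2 heq
      simp only [Finset.coe_mem, Finset.mem_coe] at hp1 hp2
      have hreroute : ∀ z1' w1' z2' w2', (z1', w1') ∈ CPI N bB → (z2', w2') ∈ CPI N bB →
          ((z1', w1').1 = y' ∧ (z1', w1') ∉ CPI N b) →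
          ¬ ((z2', w2').1 = y' ∧ (z2', w2') ∉ CPI N b) →
          (y, (z1', w1').2) = (z2', w2') → False := by
        rintro z1' w1' z2' w2' hq1 hq2 hr1 hr2 he
        rw [Prod.mk.injEq] at he
        obtain ⟨he1, he2⟩ := he
        subst he1
        subst he2
        have hz1 : y' = z1' := hr1.1.symm
        subst hz1
        obtain ⟨_, _, _, _, _, _, _, hy'w⟩ := mem_CPI.1 hq1
        obtain ⟨a', d', ha', hd', had', hba', hbd', _⟩ := mem_CPI.1 hq2
        rw [hSrc] at hbd'
        have hdm : d' < m' := by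
          rcases Nat.lt_or_ge d' m' with h | h
          · exact h
          · rcases Nat.eq_or_lt_of_le h with h' | h'
            · exfalso; rw [h'] at hbm'; exact hne (hbd'.1.symm.trans hbm')
            · exact absurd h' hbd'.2
        have hw1 : w1' ≠ y := by omega
        have hw2 : w1' ≠ y' := by omega
        have hba'' : b a' = w1' := (hOth w1' a' hw1 hw2).1 hba'
        exact hr1.2 (mem_CPI.2 ⟨a', m', ha', hm', by omega, hba'', hbm', hy'w⟩)
      simp only at heq
      by_cases h1 : (z1, w1).1 = y' ∧ (z1, w1) ∉ CPI N b <;>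
        by_cases h2 : (z2, w2).1 = y' ∧ (z2, w2) ∉ CPI N b
      · rw [if_pos h1, if_pos h2] at heq
        rw [Prod.mk.injEq] at heq
        rw [Prod.mk.injEq]
        exact ⟨h1.1.trans h2.1.symm, heq.2⟩
      · rw [if_pos h1, if_neg h2] at heq
        exact absurd heq (by intro he; exact hreroute z1 w1 z2 w2 hp1 hp2 h1 h2 he)
      · rw [if_neg h1, if_pos h2] at heq
        exact absurd heq.symm (by intro he; exact hreroute z2 w2 z1 w1 hp2 hp1 h2 h1 he)
      · rw [if_neg h1, if_neg h2] at heq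
        exact heq
  calc (CPI N bB).card ≤ ((CPI N b).erase (y, y')).card := hmain
    _ < (CPI N b).card := Finset.card_erase_lt_of_mem hyy'
lemma step_lemma {N : ℕ} {m : ℕ → ℕ} {q : ℕ → ℝ} {c : ℝ} (hq : ∀ k, 0 ≤ q k)
    (hm : ∀ k k', 1 ≤ k → k ≤ k' → k' ≤ N → m k ≤ m k') (hc0 : 0 ≤ c)
    {b : ℕ → ℕ} (hb : VldI m c N b) (hns : ¬ SortedI N b) :
    ∃ b', VldI m c N b' ∧ HHI q N b' ≤ HHI q N b ∧
      (CPI N b').card < (CPI N b).card := by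
  unfold SortedI at hns
  push_neg at hns
  obtain ⟨k, k', hk1, hkk', hk'N, hlt⟩ := hns
  have hkN : k ≤ N := le_trans hkk' hk'N
  have hk'1 : 1 ≤ k' := le_trans hk1 hkk'
  have hkk : k < k' := lt_of_le_of_ne hkk' (by rintro rfl; exact lt_irrefl _ hlt)
  set y := b k' with hy
  set y' := b k with hy'
  have hylt : y < y' := hlt
  have hne : y ≠ y' := ne_of_lt hylt
  have hyy' : (y, y') ∈ CPI N b :=
    mem_CPI.2 ⟨k, k', ⟨hk1, hkN⟩, ⟨hk'1, hk'N⟩, hkk, rfl, rfl, hylt⟩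
  -- fibers
  have hFy : ((Finset.Icc 1 N).filter (fun j => b j = y)).Nonempty :=
    ⟨k', Finset.mem_filter.2 ⟨Finset.mem_Icc.2 ⟨hk'1, hk'N⟩, rfl⟩⟩
  have hFy' : ((Finset.Icc 1 N).filter (fun j => b j = y')).Nonempty :=
    ⟨k, Finset.mem_filter.2 ⟨Finset.mem_Icc.2 ⟨hk1, hkN⟩, rfl⟩⟩
  set M := ((Finset.Icc 1 N).filter (fun j => b j = y)).max' hFy with hMdef
  set m' := ((Finset.Icc 1 N).filter (fun j => b j = y')).min' hFy' with hm'def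
  have hMmem := Finset.max'_mem _ hFy
  rw [Finset.mem_filter, Finset.mem_Icc] at hMmem
  have hM : 1 ≤ M ∧ M ≤ N := hMmem.1
  have hbM : b M = y := hMmem.2
  have hMmax : ∀ j, 1 ≤ j → j ≤ N → b j = y → j ≤ M := by
    intro j h1 h2 h3
    rw [hMdef]
    exact Finset.le_max' ((Finset.Icc 1 N).filter (fun i => b i = y)) j
      (Finset.mem_filter.2 ⟨Finset.mem_Icc.2 ⟨h1, h2⟩, h3⟩)
  have hm'mem := Finset.min'_mem _ hFy'
  rw [Finset.mem_filter, Finset.mem_Icc] at hm'mem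
  have hm'12 : 1 ≤ m' ∧ m' ≤ N := hm'mem.1
  have hbm' : b m' = y' := hm'mem.2
  have hm'min : ∀ j, 1 ≤ j → j ≤ N → b j = y' → m' ≤ j := by
    intro j h1 h2 h3
    rw [hm'def]
    exact Finset.min'_le ((Finset.Icc 1 N).filter (fun i => b i = y')) j
      (Finset.mem_filter.2 ⟨Finset.mem_Icc.2 ⟨h1, h2⟩, h3⟩)
  set bA := mvI b y' y (· < M) with hbAdef
  set bB := mvI b y y' (m' < ·) with hbBdef
  have hne' : y' ≠ y := hne.symm
  -- validity
  have hbAv : VldI m c N bA := by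
    intro j h1 h2
    rw [hbAdef]
    unfold mvI
    split
    · rename_i hcond
      constructor
      · calc m j ≤ m M := hm j M h1 (le_of_lt hcond.2) hM.2
          _ ≤ b M := (hb M hM.1 hM.2).1
          _ = y := hbM
      · have h3 : (y:ℝ) ≤ (y':ℝ) := Nat.cast_le.2 (le_of_lt hylt)
        calc (y:ℝ) ≤ (y':ℝ) := h3
          _ = ((b j : ℕ) : ℝ) := by rw [hcond.1]
          _ ≤ c * m j := (hb j h1 h2).2
    · exact hb j h1 h2
  have hbBv : VldI m c N bB := by
    intro j h1 h2
    rw [hbBdef]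
    unfold mvI
    split
    · rename_i hcond
      constructor
      · calc m j ≤ b j := (hb j h1 h2).1
          _ = y := hcond.1
          _ ≤ y' := le_of_lt hylt
      · calc (y':ℝ) = ((b m' : ℕ) : ℝ) := by rw [hbm']
          _ ≤ c * m m' := (hb m' hm'12.1 hm'12.2).2
          _ ≤ c * m j := by
              apply mul_le_mul_of_nonneg_left _ hc0
              exact_mod_cast hm m' j hm'12.1 (le_of_lt hcond.2) h2
    · exact hb j h1 h2
  -- masses
  set u := MassI q N b y with hu
  set v := MassI q N b y' with hv
  set tA := ∑ j ∈ Finset.Icc 1 N, if b j = y' ∧ j < M then q j else 0 with htA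
  set tB := ∑ j ∈ Finset.Icc 1 N, if b j = y ∧ m' < j then q j else 0 with htB
  have hu0 : 0 ≤ u := MassI_nonneg hq N b y
  have hv0 : 0 ≤ v := MassI_nonneg hq N b y'
  have htA0 : 0 ≤ tA := Finset.sum_nonneg fun j _ => by split <;> simp [hq j]
  have htB0 : 0 ≤ tB := Finset.sum_nonneg fun j _ => by split <;> simp [hq j]
  have htAv : tA ≤ v := by
    apply Finset.sum_le_sum
    intro j _
    by_cases h : b j = y' ∧ j < M
    · rw [if_pos h, if_pos h.1]
    · rw [if_neg h]; split <;> simp [hq j]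
  have htBu : tB ≤ u := by
    apply Finset.sum_le_sum
    intro j _
    by_cases h : b j = y ∧ m' < j
    · rw [if_pos h, if_pos h.1]
    · rw [if_neg h]; split <;> simp [hq j]
  have hy_img : y ∈ (Finset.Icc 1 N).image b :=
    Finset.mem_image.2 ⟨k', Finset.mem_Icc.2 ⟨hk'1, hk'N⟩, rfl⟩
  have hy'_img : y' ∈ (Finset.Icc 1 N).image b :=
    Finset.mem_image.2 ⟨k, Finset.mem_Icc.2 ⟨hk1, hkN⟩, rfl⟩
  set R := ∑ z ∈ (((Finset.Icc 1 N).image b).erase y).erase y', eta (MassI q N b z) with hR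
  have hsplit : ∀ b₂ : ℕ → ℕ, (∀ z, z ≠ y → z ≠ y' → MassI q N b₂ z = MassI q N b z) →
      (Finset.Icc 1 N).image b₂ ⊆ (Finset.Icc 1 N).image b →
      HHI q N b₂ = R + eta (MassI q N b₂ y) + eta (MassI q N b₂ y') := by
    intro b₂ hmz himg
    rw [HHI_eq_sum_subset himg,
      two_erase_sum (fun z => eta (MassI q N b₂ z)) hy_img hy'_img hne]
    have : ∑ z ∈ (((Finset.Icc 1 N).image b).erase y).erase y', eta (MassI q N b₂ z) = R := by
      apply Finset.sum_congr rfl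
      intro z hz
      rw [Finset.mem_erase] at hz
      have hz2 := Finset.mem_erase.1 hz.2
      rw [hmz z hz2.1 hz.1]
    rw [this]
  have hHb : HHI q N b = R + eta u + eta v :=
    hsplit b (fun _ _ _ => rfl) (subset_refl _)
  have hHbA : HHI q N bA = R + eta (u + tA) + eta (v - tA) := by
    have h1 := hsplit bA (fun z h1 h2 => MassI_mvI_other q N h2 h1)
      (image_mvI_subset N hy_img)
    rw [h1, MassI_mvI_target hne' q N, MassI_mvI_source hne' q N]
  have hHbB : HHI q N bB = R + eta (u - tB) + eta (v + tB) := by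
    have h1 := hsplit bB (fun z h1 h2 => MassI_mvI_other q N h1 h2)
      (image_mvI_subset N hy'_img)
    rw [h1, MassI_mvI_target hne q N, MassI_mvI_source hne q N]
  have hex := eta_exchange hu0 hv0 htA0 htB0 htAv htBu
  rcases min_cases (eta (u + tA) + eta (v - tA)) (eta (u - tB) + eta (v + tB)) with
    ⟨hmin, _⟩ | ⟨hmin, _⟩
  · refine ⟨bA, hbAv, ?_, CPI_A_dec hyy' hM hbM hMmax⟩
    rw [hHbA, hHb]
    rw [hmin] at hex
    linarith
  · refine ⟨bB, hbBv, ?_, CPI_B_dec hyy' hm'12 hbm' hm'min⟩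
    rw [hHbB, hHb]
    rw [hmin] at hex
    linarith

lemma uncross {N : ℕ} {m : ℕ → ℕ} {q : ℕ → ℝ} {c : ℝ} (hq : ∀ k, 0 ≤ q k)
    (hm : ∀ k k', 1 ≤ k → k ≤ k' → k' ≤ N → m k ≤ m k') (hc0 : 0 ≤ c) :
    ∀ X : ℕ, ∀ b, VldI m c N b → (CPI N b).card ≤ X →
    ∃ b', VldI m c N b' ∧ SortedI N b' ∧ HHI q N b' ≤ HHI q N b := by
  intro X
  induction X with
  | zero =>
    intro b hb hcard
    exact ⟨b, hb, sorted_of_CPI_empty (Finset.card_eq_zero.1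
      (le_antisymm hcard (Nat.zero_le _))), le_refl _⟩
  | succ n ih =>
    intro b hb hcard
    by_cases hs : SortedI N b
    · exact ⟨b, hb, hs, le_refl _⟩
    · obtain ⟨b', hb', hH, hX⟩ := step_lemma hq hm hc0 hb hs
      obtain ⟨b'', h1, h2, h3⟩ := ih b' hb' (by omega)
      exact ⟨b'', h1, h2, le_trans h3 hH⟩
lemma Icc_split {j' j : ℕ} (hj : j' ≤ j) :
    Finset.Icc 1 j = Finset.Icc 1 j' ∪ Finset.Icc (j'+1) j := by
  ext k; simp only [Finset.mem_Icc, Finset.mem_union]; omega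

lemma Icc_split_disj {j' j : ℕ} :
    Disjoint (Finset.Icc 1 j') (Finset.Icc (j'+1) j) := by
  rw [Finset.disjoint_left]
  intro k hk hk'
  rw [Finset.mem_Icc] at hk hk'
  omega

lemma image_const_seg {j' j : ℕ} {b : ℕ → ℕ} {ystar : ℕ} (hj : j' < j)
    (hconst : ∀ k, j' < k → k ≤ j → b k = ystar) :
    (Finset.Icc (j'+1) j).image b = {ystar} := by
  ext z
  simp only [Finset.mem_image, Finset.mem_Icc, Finset.mem_singleton]
  constructor
  · rintro ⟨k, ⟨h1, h2⟩, rfl⟩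
    exact hconst k (by omega) h2
  · rintro rfl
    exact ⟨j, ⟨by omega, le_refl _⟩, hconst j hj (le_refl _)⟩

lemma MassI_prefix {q : ℕ → ℝ} {j' j : ℕ} {b : ℕ → ℕ} {ystar : ℕ} (hj : j' < j)
    (hconst : ∀ k, j' < k → k ≤ j → b k = ystar) {z : ℕ} (hz : z ≠ ystar) :
    MassI q j b z = MassI q j' b z := by
  unfold MassI
  rw [Icc_split (le_of_lt hj), Finset.sum_union Icc_split_disj]
  have h2 : ∑ k ∈ Finset.Icc (j'+1) j, (if b k = z then q k else 0) = 0 := by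
    apply Finset.sum_eq_zero
    intro k hk
    rw [Finset.mem_Icc] at hk
    rw [if_neg]
    rw [hconst k (by omega) hk.2]
    exact fun h => hz h.symm
  rw [h2, add_zero]

lemma MassI_prefix_ystar {q : ℕ → ℝ} {j' j : ℕ} {b : ℕ → ℕ} {ystar : ℕ} (hj : j' < j)
    (hconst : ∀ k, j' < k → k ≤ j → b k = ystar) :
    MassI q j b ystar = MassI q j' b ystar + ∑ k ∈ Finset.Icc (j'+1) j, q k := by
  unfold MassI
  rw [Icc_split (le_of_lt hj), Finset.sum_union Icc_split_disj]
  congr 1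
  apply Finset.sum_congr rfl
  intro k hk
  rw [Finset.mem_Icc] at hk
  rw [if_pos (hconst k (by omega) hk.2)]

lemma HHI_prefix_split {q : ℕ → ℝ} {j' j : ℕ} {b : ℕ → ℕ} {ystar : ℕ}
    (hj : j' < j)
    (hconst : ∀ k, j' < k → k ≤ j → b k = ystar)
    (hfresh : ystar ∉ (Finset.Icc 1 j').image b) :
    HHI q j b = HHI q j' b + eta (∑ k ∈ Finset.Icc (j'+1) j, q k) := by
  have himg : (Finset.Icc 1 j).image b = insert ystar ((Finset.Icc 1 j').image b) := by
    rw [Icc_split (le_of_lt hj), Finset.image_union, image_const_seg hj hconst]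
    rw [Finset.union_comm]
    rfl
  rw [HHI, himg, Finset.sum_insert hfresh]
  have h1 : MassI q j b ystar = ∑ k ∈ Finset.Icc (j'+1) j, q k := by
    rw [MassI_prefix_ystar hj hconst, MassI_eq_zero hfresh, zero_add]
  rw [h1]
  have h2 : ∑ z ∈ (Finset.Icc 1 j').image b, eta (MassI q j b z) = HHI q j' b := by
    apply Finset.sum_congr rfl
    intro z hz
    have hzy : z ≠ ystar := fun h => hfresh (h ▸ hz)
    rw [MassI_prefix hj hconst hzy]
  rw [h2]
  ring

lemma HHI_prefix_split_le {q : ℕ → ℝ} (hq : ∀ k, 0 ≤ q k) {j' j : ℕ} {b : ℕ → ℕ}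
    {ystar : ℕ} (hj : j' < j)
    (hconst : ∀ k, j' < k → k ≤ j → b k = ystar) :
    HHI q j b ≤ HHI q j' b + eta (∑ k ∈ Finset.Icc (j'+1) j, q k) := by
  by_cases hfresh : ystar ∈ (Finset.Icc 1 j').image b
  · have himg : (Finset.Icc 1 j).image b = (Finset.Icc 1 j').image b := by
      rw [Icc_split (le_of_lt hj), Finset.image_union, image_const_seg hj hconst]
      rw [Finset.union_comm]
      exact Finset.insert_eq_self.2 hfresh
    rw [HHI, himg, ← Finset.sum_erase_add _ _ hfresh]
    have h2 : ∑ z ∈ ((Finset.Icc 1 j').image b).erase ystar, eta (MassI q j b z) =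
        ∑ z ∈ ((Finset.Icc 1 j').image b).erase ystar, eta (MassI q j' b z) := by
      apply Finset.sum_congr rfl
      intro z hz
      rw [MassI_prefix hj hconst (Finset.mem_erase.1 hz).1]
    rw [h2, MassI_prefix_ystar hj hconst]
    have h3 : eta (MassI q j' b ystar + ∑ k ∈ Finset.Icc (j'+1) j, q k) ≤
        eta (MassI q j' b ystar) + eta (∑ k ∈ Finset.Icc (j'+1) j, q k) :=
      eta_subadd (MassI_nonneg hq j' b ystar) (Finset.sum_nonneg fun k _ => hq k)
    have h4 : HHI q j' b = (∑ z ∈ ((Finset.Icc 1 j').image b).erase ystar,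
        eta (MassI q j' b z)) + eta (MassI q j' b ystar) := by
      rw [HHI, ← Finset.sum_erase_add _ _ hfresh]
    rw [h4]
    linarith
  · exact le_of_eq (HHI_prefix_split hj hconst hfresh)

lemma dp_le {N : ℕ} {m : ℕ → ℕ} {q : ℕ → ℝ} {c : ℝ} {OPT : ℕ → ℝ}
    (hOPT0 : OPT 0 = 0)
    (hbound : ∀ j i, 1 ≤ j → j ≤ N → 1 ≤ i → i ≤ j → (m j : ℝ) ≤ c * m i →
       OPT j ≤ OPT (i-1) + eta (∑ k ∈ Finset.Icc i j, q k)) :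
    ∀ j, j ≤ N → ∀ b, VldI m c j b → SortedI j b → OPT j ≤ HHI q j b := by
  intro j
  induction j using Nat.strong_induction_on with
  | _ j ih =>
    intro hjN b hb hs
    rcases Nat.eq_zero_or_pos j with rfl | hj1
    · rw [hOPT0]
      unfold HHI
      simp
    · have hFne : ((Finset.Icc 1 j).filter (fun k => b k = b j)).Nonempty :=
        ⟨j, Finset.mem_filter.2 ⟨Finset.mem_Icc.2 ⟨hj1, le_refl _⟩, rfl⟩⟩
      have hex : ∃ i, (1 ≤ i ∧ i ≤ j ∧ b i = b j) ∧
          ∀ k, 1 ≤ k → k ≤ j → b k = b j → i ≤ k := by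
        refine ⟨((Finset.Icc 1 j).filter (fun k => b k = b j)).min' hFne, ?_, ?_⟩
        · have h := Finset.min'_mem _ hFne
          rw [Finset.mem_filter, Finset.mem_Icc] at h
          exact ⟨h.1.1, h.1.2, h.2⟩
        · intro k h1 h2 h3
          exact Finset.min'_le ((Finset.Icc 1 j).filter (fun k => b k = b j)) k
            (Finset.mem_filter.2 ⟨Finset.mem_Icc.2 ⟨h1, h2⟩, h3⟩)
      obtain ⟨i, ⟨hi1, hij, hbi⟩, himin⟩ := hex
      have hconst : ∀ k, i - 1 < k → k ≤ j → b k = b j := by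
        intro k h1 h2
        have hik : i ≤ k := by omega
        have h1k : 1 ≤ k := le_trans hi1 hik
        have e1 : b i ≤ b k := hs i k hi1 hik h2
        have e2 : b k ≤ b j := hs k j h1k h2 (le_refl _)
        omega
      have hfresh : b j ∉ (Finset.Icc 1 (i-1)).image b := by
        intro hmem
        obtain ⟨k, hk, hbk⟩ := Finset.mem_image.1 hmem
        rw [Finset.mem_Icc] at hk
        have := himin k hk.1 (by omega) hbk
        omega
      have hsplit := HHI_prefix_split (q := q) (show i - 1 < j by omega) hconst hfresh
      rw [show i - 1 + 1 = i by omega] at hsplit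
      have hadm : (m j : ℝ) ≤ c * m i := by
        have h1 : (m j : ℝ) ≤ (b j : ℝ) := Nat.cast_le.2 (hb j hj1 (le_refl _)).1
        have h3 : ((b i : ℕ) : ℝ) ≤ c * m i := (hb i hi1 hij).2
        rw [hbi] at h3
        linarith
      have hOPTle := hbound j i hj1 hjN hi1 hij hadm
      have hIH := ih (i-1) (by omega) (by omega) b
        (fun k h1 h2 => hb k h1 (by omega))
        (fun k k' h1 h2 h3 => hs k k' h1 h2 (by omega))
      rw [hsplit]
      linarith

lemma dp_ge {N : ℕ} {m : ℕ → ℕ} {q : ℕ → ℝ} {c : ℝ} {OPT : ℕ → ℝ}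
    (hq : ∀ k, 0 ≤ q k)
    (hm : ∀ k k', 1 ≤ k → k ≤ k' → k' ≤ N → m k ≤ m k') (hc : 1 ≤ c)
    (hOPT0 : OPT 0 = 0)
    (hattain : ∀ j, 1 ≤ j → j ≤ N → ∃ i, 1 ≤ i ∧ i ≤ j ∧ (m j : ℝ) ≤ c * m i ∧
       OPT j = OPT (i-1) + eta (∑ k ∈ Finset.Icc i j, q k)) :
    ∀ j, j ≤ N → ∃ b, VldI m c j b ∧ HHI q j b ≤ OPT j := by
  intro j
  induction j using Nat.strong_induction_on with
  | _ j ih =>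
    intro hjN
    rcases Nat.eq_zero_or_pos j with rfl | hj1
    · refine ⟨m, fun k h1 h2 => absurd h2 (by omega), ?_⟩
      rw [hOPT0]
      unfold HHI
      simp
    · obtain ⟨i, hi1, hij, hadm, hrec⟩ := hattain j hj1 hjN
      obtain ⟨b₀, hb₀v, hb₀H⟩ := ih (i-1) (by omega) (by omega)
      set b : ℕ → ℕ := fun k => if k ≤ i-1 then b₀ k else m j with hbdef
      have hbv : VldI m c j b := by
        intro k h1 h2
        rw [hbdef]
        simp only
        split
        · rename_i hki
          exact hb₀v k h1 hki
        · rename_i hki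
          constructor
          · exact hm k j h1 h2 hjN
          · calc (m j : ℝ) ≤ c * m i := hadm
              _ ≤ c * m k := by
                  apply mul_le_mul_of_nonneg_left _ (by linarith : (0:ℝ) ≤ c)
                  exact_mod_cast hm i k hi1 (by omega) (le_trans h2 hjN)
      have hconst : ∀ k, i - 1 < k → k ≤ j → b k = m j := by
        intro k h1 _
        rw [hbdef]
        simp only
        rw [if_neg (by omega)]
      have hH : HHI q j b ≤ HHI q (i-1) b + eta (∑ k ∈ Finset.Icc i j, q k) := by
        have h := HHI_prefix_split_le hq (show i - 1 < j by omega) hconst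
        rwa [show i - 1 + 1 = i by omega] at h
      have hHeq : HHI q (i-1) b = HHI q (i-1) b₀ := by
        apply HHI_congr
        intro k hk
        rw [Finset.mem_Icc] at hk
        rw [hbdef]
        simp only
        rw [if_pos hk.2]
      refine ⟨b, hbv, ?_⟩
      rw [hrec]
      rw [hHeq] at hH
      linarith
lemma opt_facts {N : ℕ} {m : ℕ → ℕ} {q : ℕ → ℝ} {c : ℝ} {OPT : ℕ → ℝ} (hc : 1 ≤ c)
    (hrec : ∀ j, 1 ≤ j → j ≤ N → OPT j = sInf {x : ℝ | ∃ i, 1 ≤ i ∧ i ≤ j ∧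
      (m j : ℝ) ≤ c * (m i : ℝ) ∧ x = OPT (i-1) + eta (∑ k ∈ Finset.Icc i j, q k)}) :
    (∀ j i, 1 ≤ j → j ≤ N → 1 ≤ i → i ≤ j → (m j : ℝ) ≤ c * m i →
       OPT j ≤ OPT (i-1) + eta (∑ k ∈ Finset.Icc i j, q k)) ∧
    (∀ j, 1 ≤ j → j ≤ N → ∃ i, 1 ≤ i ∧ i ≤ j ∧ (m j : ℝ) ≤ c * m i ∧
       OPT j = OPT (i-1) + eta (∑ k ∈ Finset.Icc i j, q k)) := by
  classical
  have main : ∀ j, 1 ≤ j → j ≤ N →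
      (∀ i, 1 ≤ i → i ≤ j → (m j : ℝ) ≤ c * m i →
        OPT j ≤ OPT (i-1) + eta (∑ k ∈ Finset.Icc i j, q k)) ∧
      (∃ i, 1 ≤ i ∧ i ≤ j ∧ (m j : ℝ) ≤ c * m i ∧
        OPT j = OPT (i-1) + eta (∑ k ∈ Finset.Icc i j, q k)) := by
    intro j hj1 hjN
    have hset : {x : ℝ | ∃ i, 1 ≤ i ∧ i ≤ j ∧ (m j : ℝ) ≤ c * (m i : ℝ) ∧
        x = OPT (i-1) + eta (∑ k ∈ Finset.Icc i j, q k)} =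
        ↑(((Finset.Icc 1 j).filter (fun i => (m j : ℝ) ≤ c * (m i : ℝ))).image
          (fun i => OPT (i-1) + eta (∑ k ∈ Finset.Icc i j, q k))) := by
      ext x
      simp only [Set.mem_setOf_eq, Finset.coe_image, Set.mem_image, Finset.mem_coe,
        Finset.mem_filter, Finset.mem_Icc]
      constructor
      · rintro ⟨i, h1, h2, h3, rfl⟩
        exact ⟨i, ⟨⟨h1, h2⟩, h3⟩, rfl⟩
      · rintro ⟨i, ⟨⟨h1, h2⟩, h3⟩, rfl⟩
        exact ⟨i, h1, h2, h3, rfl⟩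
    have hjD : j ∈ (Finset.Icc 1 j).filter (fun i => (m j : ℝ) ≤ c * (m i : ℝ)) := by
      refine Finset.mem_filter.2 ⟨Finset.mem_Icc.2 ⟨hj1, le_refl _⟩, ?_⟩
      have h0 : (0:ℝ) ≤ (m j : ℝ) := Nat.cast_nonneg _
      nlinarith
    have hne : (((Finset.Icc 1 j).filter (fun i => (m j : ℝ) ≤ c * (m i : ℝ))).image
        (fun i => OPT (i-1) + eta (∑ k ∈ Finset.Icc i j, q k))).Nonempty :=
      ⟨_, Finset.mem_image.2 ⟨j, hjD, rfl⟩⟩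
    have hOPTj : OPT j = (((Finset.Icc 1 j).filter (fun i => (m j : ℝ) ≤ c * (m i : ℝ))).image
        (fun i => OPT (i-1) + eta (∑ k ∈ Finset.Icc i j, q k))).min' hne := by
      rw [hrec j hj1 hjN, hset, hne.csInf_eq_min']
    constructor
    · intro i h1 h2 h3
      rw [hOPTj]
      exact Finset.min'_le _ _ (Finset.mem_image.2
        ⟨i, Finset.mem_filter.2 ⟨Finset.mem_Icc.2 ⟨h1, h2⟩, h3⟩, rfl⟩)
    · have hmem := Finset.min'_mem _ hne
      obtain ⟨i, hiD, hgi⟩ := Finset.mem_image.1 hmem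
      rw [Finset.mem_filter, Finset.mem_Icc] at hiD
      exact ⟨i, hiD.1.1, hiD.1.2, hiD.2, by rw [hOPTj, ← hgi]⟩
  exact ⟨fun j i h1 h2 h3 h4 h5 => (main j h1 h2).1 i h3 h4 h5,
    fun j h1 h2 => (main j h1 h2).2⟩

lemma Hent_eq_HHI {S : Type*} [Fintype S] [DecidableEq S] (p : S → ℝ) (f : S → ℕ)
    (σ : ℕ → S) (N : ℕ)
    (hsurj : ∀ s : S, ∃ k, (1 ≤ k ∧ k ≤ N) ∧ σ k = s)
    (hinj : ∀ k k', 1 ≤ k → k ≤ N → 1 ≤ k' → k' ≤ N → σ k = σ k' → k = k') :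
    Hent p f = HHI (fun k => p (σ k)) N (fun k => f (σ k)) := by
  have huniv : (Finset.univ : Finset S) = (Finset.Icc 1 N).image σ := by
    ext s
    simp only [Finset.mem_univ, true_iff, Finset.mem_image, Finset.mem_Icc]
    obtain ⟨k, hk, hks⟩ := hsurj s
    exact ⟨k, hk, hks⟩
  have himg : (Finset.univ : Finset S).image f =
      (Finset.Icc 1 N).image (fun k => f (σ k)) := by
    rw [huniv, Finset.image_image]
    rfl
  have hmass : ∀ y, (∑ s ∈ Finset.univ.filter (fun s => f s = y), p s) =
      MassI (fun k => p (σ k)) N (fun k => f (σ k)) y := by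
    intro y
    rw [Finset.sum_filter, huniv, Finset.sum_image]
    · rfl
    · intro k hk k' hk' he
      rw [Finset.mem_coe, Finset.mem_Icc] at hk hk'
      exact hinj k k' hk.1 hk.2 hk'.1 hk'.2 he
  rw [Hent, HHI, himg]
  exact Finset.sum_congr rfl fun y _ => by rw [hmass y]

lemma Hent_nonneg {S : Type*} [Fintype S] [DecidableEq S] (p : S → ℝ)
    (hp : ∀ s, 0 ≤ p s) (hsum : ∑ s, p s = 1) (f : S → ℕ) : 0 ≤ Hent p f := by
  apply Finset.sum_nonneg
  intro y _
  apply eta_nonneg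
  · exact Finset.sum_nonneg fun s _ => hp s
  · rw [← hsum]
    exact Finset.sum_le_sum_of_subset_of_nonneg (Finset.filter_subset _ _)
      (fun s _ _ => hp s)

/-- the dynamic-programming recursion
`OPT(0) = 0`, `OPT(j) = min_{i ≤ j : n(σ(j)) ≤ c·n(σ(i))} OPT(i-1) + η(Σ_{k=i}^j p(σ(k)))`
computes, at `j = N`, the minimum padded-size entropy over all valid deterministic
padding schemes. -/
theorem stmt_5 {S : Type*} [Fintype S] [DecidableEq S] [Nonempty S]
    (n : S → ℕ) (hn : ∀ s, 1 ≤ n s)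
    (p : S → ℝ) (hp : ∀ s, 0 < p s) (hsum : ∑ s, p s = 1)
    (c : ℝ) (hc : 1 ≤ c)
    (σ : ℕ → S) (hσ : Set.BijOn σ (Set.Icc 1 (Fintype.card S)) Set.univ)
    (hσmono : ∀ k, 1 ≤ k → k < Fintype.card S → n (σ k) ≤ n (σ (k + 1)))
    (OPT : ℕ → ℝ) (hOPT0 : OPT 0 = 0)
    (hOPTrec : ∀ j, 1 ≤ j → j ≤ Fintype.card S →
      OPT j = sInf {x : ℝ | ∃ i, 1 ≤ i ∧ i ≤ j ∧ (n (σ j) : ℝ) ≤ c * (n (σ i) : ℝ) ∧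
        x = OPT (i - 1) + eta (∑ k ∈ Finset.Icc i j, p (σ k))}) :
    OPT (Fintype.card S) = sInf {x : ℝ | ∃ f : S → ℕ, ValidDet n c f ∧ x = Hent p f} := by
  classical
  set N := Fintype.card S with hN
  have hsurj : ∀ s : S, ∃ k, (1 ≤ k ∧ k ≤ N) ∧ σ k = s := by
    intro s
    obtain ⟨k, hk, he⟩ := hσ.surjOn (Set.mem_univ s)
    exact ⟨k, Set.mem_Icc.1 hk, he⟩
  have hinj : ∀ k k', 1 ≤ k → k ≤ N → 1 ≤ k' → k' ≤ N → σ k = σ k' → k = k' := by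
    intro k k' h1 h2 h3 h4 he
    exact hσ.injOn (Set.mem_Icc.2 ⟨h1, h2⟩) (Set.mem_Icc.2 ⟨h3, h4⟩) he
  have hmono' : ∀ d k, 1 ≤ k → k + d ≤ N → n (σ k) ≤ n (σ (k + d)) := by
    intro d
    induction d with
    | zero => intro k _ _; simp
    | succ d ihd =>
      intro k h1 h2
      calc n (σ k) ≤ n (σ (k + d)) := ihd k h1 (by omega)
        _ ≤ n (σ (k + d + 1)) := hσmono (k + d) (by omega) (by omega)
  have hm : ∀ k k', 1 ≤ k → k ≤ k' → k' ≤ N → n (σ k) ≤ n (σ k') := by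
    intro k k' h1 h2 h3
    have := hmono' (k' - k) k h1 (by omega)
    rwa [show k + (k' - k) = k' by omega] at this
  have hq0 : ∀ k, 0 ≤ p (σ k) := fun k => le_of_lt (hp _)
  have hc0 : (0:ℝ) ≤ c := le_trans zero_le_one hc
  obtain ⟨hbound, hattain⟩ := opt_facts (N := N) (m := fun k => n (σ k))
    (q := fun k => p (σ k)) (OPT := OPT) hc hOPTrec
  have hSne : {x : ℝ | ∃ f : S → ℕ, ValidDet n c f ∧ x = Hent p f}.Nonempty := by
    refine ⟨Hent p n, n, fun s => ⟨le_refl _, ?_⟩, rfl⟩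
    exact le_mul_of_one_le_left (Nat.cast_nonneg _) hc
  have hSbdd : BddBelow {x : ℝ | ∃ f : S → ℕ, ValidDet n c f ∧ x = Hent p f} := by
    refine ⟨0, fun x hx => ?_⟩
    obtain ⟨f, _, rfl⟩ := hx
    exact Hent_nonneg p (fun s => le_of_lt (hp s)) hsum f
  apply le_antisymm
  · apply le_csInf hSne
    rintro x ⟨f, hfv, rfl⟩
    have hbV : VldI (fun k => n (σ k)) c N (fun k => f (σ k)) :=
      fun k _ _ => hfv (σ k)
    obtain ⟨b', hb'v, hb's, hb'H⟩ := uncross (N := N) hq0 hm hc0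
      (CPI N (fun k => f (σ k))).card (fun k => f (σ k)) hbV (le_refl _)
    have h1 := dp_le hOPT0 hbound N (le_refl N) b' hb'v hb's
    rw [Hent_eq_HHI p f σ N hsurj hinj]
    exact le_trans h1 hb'H
  · obtain ⟨b, hbv, hbH⟩ := dp_ge hq0 hm hc hOPT0 hattain N (le_refl N)
    choose g hg1 hg2 using hsurj
    have hfv : ValidDet n c (fun s => b (g s)) := by
      intro s
      refine ⟨?_, ?_⟩
      · have h1 : n (σ (g s)) ≤ b (g s) := (hbv (g s) (hg1 s).1 (hg1 s).2).1
        rw [hg2 s] at h1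
        exact h1
      · have h2 : ((b (g s) : ℕ) : ℝ) ≤ c * n (σ (g s)) := (hbv (g s) (hg1 s).1 (hg1 s).2).2
        rw [hg2 s] at h2
        exact h2
    have hfH : Hent p (fun s => b (g s)) = HHI (fun k => p (σ k)) N b := by
      rw [Hent_eq_HHI p _ σ N (fun s => ⟨g s, hg1 s, hg2 s⟩) hinj]
      apply HHI_congr
      intro k hk
      rw [Finset.mem_Icc] at hk
      have : g (σ k) = k := by
        apply hinj _ _ (hg1 (σ k)).1 (hg1 (σ k)).2 hk.1 hk.2
        exact hg2 (σ k)
      show b (g (σ k)) = b k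
      rw [this]
    have hmem : Hent p (fun s => b (g s)) ∈
        {x : ℝ | ∃ f : S → ℕ, ValidDet n c f ∧ x = Hent p f} :=
      ⟨fun s => b (g s), hfv, rfl⟩
    calc sInf {x : ℝ | ∃ f : S → ℕ, ValidDet n c f ∧ x = Hent p f}
        ≤ Hent p (fun s => b (g s)) := csInf_le hSbdd hmem
      _ = HHI (fun k => p (σ k)) N b := hfH
      _ ≤ OPT N := hbH
end

section
/- Let S* ⊆ S be a subset with p(s) > 0 for all s ∈ S*, such that for all distinct s, s' ∈ S* no natural number y satisfies both n(s) ≤ y ≤ c·n(s) and n(s') ≤ y ≤ c·n(s'). Then every valid randomized padding scheme q satisfies Σ_{y∈ℕ} max_{s ∈ S : p(s) > 0} q(s,y) ≥ |S*|, and consequently I_∞(q) ≥ log₂ |S*|. -/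
/-!
Disjointness of the intervals `[n s, c·n s]` means that at every output length `y` at most one
`s ∈ S*` can put mass on `y`, so `∑_{s ∈ S*} q s y ≤ max_{s : p s > 0} q s y`. Summing over `y`
and exchanging the finite and the infinite sum gives `|S*| = ∑_{s ∈ S*} ∑_y q s y ≤ ∑_y max_s q s y`.
-/

/-- A randomized padding scheme `q` is valid if `q s y = 0` whenever `y < n s` or
`y > c·n s`. -/
def ValidRand {S : Type*} (n : S → ℕ) (c : ℝ) (q : S → ℕ → ℝ) : Prop :=
  ∀ s (y : ℕ), (y < n s ∨ c * (n s : ℝ) < (y : ℝ)) → q s y = 0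

theorem Finset.sum_le_of_pairwise_eq_zero_or_eq_zero {ι M : Type*} [AddCommMonoid M] [Preorder M]
    {T : Finset ι} {f : ι → M} {a : M}
    (hdisj : (T : Set ι).Pairwise fun i j => f i = 0 ∨ f j = 0)
    (hle : ∀ i ∈ T, f i ≤ a) (ha : 0 ≤ a) : ∑ i ∈ T, f i ≤ a := by
  by_cases hne : ∃ i ∈ T, f i ≠ 0
  · obtain ⟨i, hi, hfi⟩ := hne
    rw [Finset.sum_eq_single_of_mem i hi fun j hj hji => (hdisj hj hi hji).resolve_right hfi]
    exact hle i hi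
  · push Not at hne
    rwa [Finset.sum_eq_zero hne]

theorem ValidRand.mem_of_ne_zero {S : Type*} {n : S → ℕ} {c : ℝ} {q : S → ℕ → ℝ}
    (hqv : ValidRand n c q) {s : S} {y : ℕ} (hy : q s y ≠ 0) :
    n s ≤ y ∧ (y : ℝ) ≤ c * (n s : ℝ) := by
  by_contra hout
  rw [← not_lt, ← not_lt, ← not_or] at hout
  exact hy (hqv s y (not_not.mp hout))

theorem ValidRand.eq_zero_or_eq_zero {S : Type*} {n : S → ℕ} {c : ℝ} {q : S → ℕ → ℝ}
    (hqv : ValidRand n c q) {s s' : S} {y : ℕ}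
    (hdisj : ¬((n s ≤ y ∧ (y : ℝ) ≤ c * (n s : ℝ)) ∧ (n s' ≤ y ∧ (y : ℝ) ≤ c * (n s' : ℝ)))) :
    q s y = 0 ∨ q s' y = 0 := by
  by_contra! h
  exact hdisj ⟨hqv.mem_of_ne_zero h.1, hqv.mem_of_ne_zero h.2⟩

section SupOverSupport

variable {S : Type*} {q : S → ℕ → ℝ} {P : Set S}

theorem sSup_image_nonneg (hq0 : ∀ s y, 0 ≤ q s y) (y : ℕ) :
    0 ≤ sSup ((fun s => q s y) '' P) :=
  Real.sSup_nonneg <| by rintro _ ⟨s, -, rfl⟩; exact hq0 s y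

variable [Finite S]

theorem le_sSup_image_of_mem {s : S} (hs : s ∈ P) (y : ℕ) :
    q s y ≤ sSup ((fun s => q s y) '' P) :=
  le_csSup (P.toFinite.image _).bddAbove ⟨s, hs, rfl⟩

theorem summable_sSup_image (hq0 : ∀ s y, 0 ≤ q s y) (hsum : ∀ s, Summable (q s)) :
    Summable fun y => sSup ((fun s => q s y) '' P) := by
  have := Fintype.ofFinite S
  refine Summable.of_nonneg_of_le (f := fun y => ∑ s, q s y) (sSup_image_nonneg hq0)
    (fun y => Real.sSup_le ?_ ?_) (summable_sum fun s _ => hsum s)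
  · rintro _ ⟨s, -, rfl⟩
    exact Finset.single_le_sum (fun s _ => hq0 s y) (Finset.mem_univ s)
  · exact Finset.sum_nonneg fun s _ => hq0 s y

theorem card_le_tsum_sSup_image {T : Finset S} (hTP : (T : Set S) ⊆ P)
    (hq0 : ∀ s y, 0 ≤ q s y) (hsum : ∀ s, Summable (q s)) (hq1 : ∀ s, ∑' y, q s y = 1)
    (hdisj : ∀ y, (T : Set S).Pairwise fun s s' => q s y = 0 ∨ q s' y = 0) :
    (T.card : ℝ) ≤ ∑' y, sSup ((fun s => q s y) '' P) :=
  calc (T.card : ℝ) = ∑ s ∈ T, ∑' y, q s y := by simp [hq1]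
    _ = ∑' y, ∑ s ∈ T, q s y := (Summable.tsum_finsetSum fun s _ => hsum s).symm
    _ ≤ ∑' y, sSup ((fun s => q s y) '' P) :=
      Summable.tsum_le_tsum
        (fun y => Finset.sum_le_of_pairwise_eq_zero_or_eq_zero (hdisj y)
          (fun s hs => le_sSup_image_of_mem (hTP hs) y)
          (sSup_image_nonneg hq0 y))
        (summable_sum fun s _ => hsum s) (summable_sSup_image hq0 hsum)

end SupOverSupport

theorem Real.logb_natCast_le_logb {b y : ℝ} {k : ℕ} (hb : 1 < b) (hky : (k : ℝ) ≤ y)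
    (hy : 1 ≤ y) : Real.logb b k ≤ Real.logb b y := by
  rcases k.eq_zero_or_pos with rfl | hk
  · simpa using Real.logb_nonneg hb hy
  · exact Real.logb_le_logb_of_le hb (by exact_mod_cast hk) hky

theorem stmt_8_general {S : Type*} [Fintype S]
    (n : S → ℕ)
    (p : S → ℝ) (hp : ∀ s, 0 ≤ p s) (hsum : ∑ s, p s = 1)
    (c : ℝ)
    (Sstar : Finset S) (hpos : ∀ s ∈ Sstar, 0 < p s)
    (hdisj : ∀ s ∈ Sstar, ∀ s' ∈ Sstar, s ≠ s' → ∀ y : ℕ,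
      ¬((n s ≤ y ∧ (y : ℝ) ≤ c * (n s : ℝ)) ∧ (n s' ≤ y ∧ (y : ℝ) ≤ c * (n s' : ℝ))))
    (q : S → ℕ → ℝ) (hq0 : ∀ s y, 0 ≤ q s y) (hq1 : ∀ s, ∑' y, q s y = 1)
    (hqv : ValidRand n c q) :
    (Sstar.card : ℝ) ≤ (∑' y : ℕ, sSup ((fun s => q s y) '' {s : S | 0 < p s})) ∧
      Real.logb 2 (Sstar.card : ℝ) ≤
        Real.logb 2 (∑' y : ℕ, sSup ((fun s => q s y) '' {s : S | 0 < p s})) := by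
  have hqsum : ∀ s, Summable (q s) := fun s => by
    by_contra h
    simpa [tsum_eq_zero_of_not_summable h] using hq1 s
  have hcard : (Sstar.card : ℝ) ≤ ∑' y, sSup ((fun s => q s y) '' {s : S | 0 < p s}) :=
    card_le_tsum_sSup_image hpos hq0 hqsum hq1
      fun y s hs s' hs' hne => hqv.eq_zero_or_eq_zero (hdisj s hs s' hs' hne y)
  obtain ⟨s₀, hs₀⟩ : ∃ s, 0 < p s := by
    by_contra! h
    simp [fun s => le_antisymm (h s) (hp s)] at hsum
  -- `logb 2 0 = 0`, so for `Sstar = ∅` the second claim still needs the sum to be at least `1`.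
  have hone : (1 : ℝ) ≤ ∑' y, sSup ((fun s => q s y) '' {s : S | 0 < p s}) := by
    simpa using card_le_tsum_sSup_image (T := {s₀}) (by simpa using hs₀) hq0 hqsum hq1
      fun y => by simp
  exact ⟨hcard, Real.logb_natCast_le_logb one_lt_two hcard hone⟩

/-- if `S* ⊆ S` consists of objects with positive probability whose
constraint intervals `[n s, c·n s]` are pairwise disjoint (over ℕ), then every valid
randomized padding scheme `q` satisfies `Σ_y max_{s : p s > 0} q s y ≥ |S*|`, and hence
`I_∞(q) = log₂ Σ_y max_{s : p s > 0} q s y ≥ log₂ |S*|`. -/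
theorem stmt_8 {S : Type*} [Fintype S] [Nonempty S]
    (n : S → ℕ) (hn : ∀ s, 1 ≤ n s)
    (p : S → ℝ) (hp : ∀ s, 0 ≤ p s) (hsum : ∑ s, p s = 1)
    (c : ℝ) (hc : 1 ≤ c)
    (Sstar : Finset S) (hpos : ∀ s ∈ Sstar, 0 < p s)
    (hdisj : ∀ s ∈ Sstar, ∀ s' ∈ Sstar, s ≠ s' → ∀ y : ℕ,
      ¬((n s ≤ y ∧ (y : ℝ) ≤ c * (n s : ℝ)) ∧ (n s' ≤ y ∧ (y : ℝ) ≤ c * (n s' : ℝ))))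
    (q : S → ℕ → ℝ) (hq0 : ∀ s y, 0 ≤ q s y) (hq1 : ∀ s, ∑' y, q s y = 1)
    (hqv : ValidRand n c q) :
    (Sstar.card : ℝ) ≤ (∑' y : ℕ, sSup ((fun s => q s y) '' {s : S | 0 < p s})) ∧
      Real.logb 2 (Sstar.card : ℝ) ≤
        Real.logb 2 (∑' y : ℕ, sSup ((fun s => q s y) '' {s : S | 0 < p s})) :=
  stmt_8_general n p hp hsum c Sstar hpos hdisj q hq0 hq1 hqv
end

section
/- For all distinct a, a' ∈ anchors(S), no natural number y satisfies both n(a) ≤ y ≤ c·n(a) and n(a') ≤ y ≤ c·n(a'); that is, the constraint intervals of distinct anchors are pairwise disjoint. -/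
/-- The anchor set `anchors(T)`: for nonempty `T`, take the element `A T` of `T`
maximizing `n` (the choice is provided by the function `A`, with `hA` guaranteeing
`A T ∈ T`), set `reach(T) = {s' ∈ T : n (A T) ≤ c·n s'}`, and recurse on `T \ reach(T)`
(note `A T ∈ reach(T)` since `c ≥ 1`, so `T \ reach(T) = T.filter (¬·)` below). -/
noncomputable def anchors {S : Type*} [DecidableEq S] (n : S → ℕ) (c : ℝ)
    (A : Finset S → S) (hc : 1 ≤ c) (hA : ∀ T : Finset S, T.Nonempty → A T ∈ T)
    (T : Finset S) : Finset S :=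
  if h : T.Nonempty then
    insert (A T)
      (anchors n c A hc hA (T.filter fun s' => ¬((n (A T) : ℝ) ≤ c * (n s' : ℝ))))
  else ∅
termination_by T.card
decreasing_by
  refine Finset.card_lt_card ((Finset.ssubset_iff_of_subset (Finset.filter_subset _ _)).mpr
    ⟨A T, hA T h, ?_⟩)
  intro hmem
  exact (Finset.mem_filter.mp hmem).2 (le_mul_of_one_le_left (by positivity) hc)

/-- The anchor scheme `Z`: `Z s = n (A T)` for the unique step of the above recursion
(started at `T = Finset.univ`) at which `s ∈ reach(T)`. -/
noncomputable def anchorPad {S : Type*} [DecidableEq S] (n : S → ℕ) (c : ℝ)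
    (A : Finset S → S) (hc : 1 ≤ c) (hA : ∀ T : Finset S, T.Nonempty → A T ∈ T)
    (T : Finset S) (s : S) : ℕ :=
  if h : T.Nonempty then
    if s ∈ T ∧ (n (A T) : ℝ) ≤ c * (n s : ℝ) then n (A T)
    else anchorPad n c A hc hA (T.filter fun s' => ¬((n (A T) : ℝ) ≤ c * (n s' : ℝ))) s
  else 0
termination_by T.card
decreasing_by
  refine Finset.card_lt_card ((Finset.ssubset_iff_of_subset (Finset.filter_subset _ _)).mpr
    ⟨A T, hA T h, ?_⟩)
  intro hmem
  exact (Finset.mem_filter.mp hmem).2 (le_mul_of_one_le_left (by positivity) hc)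


/-!
Let `a = A T` be the first anchor chosen from `T`. Every later anchor `a'` lies outside
`reach(T)`, i.e. `c · n a' < n a`, so the interval `[n a', c · n a']` ends strictly below
the point where `[n a, c · n a]` starts. Induction along the recursion gives this separation
for every pair of distinct anchors.
-/

section Anchors

variable {S : Type*} (n : S → ℕ) (c : ℝ) (A : Finset S → S)

/-- `T \ reach(T)`, the set on which `anchors` recurses. -/
noncomputable def unreached (T : Finset S) : Finset S :=
  T.filter fun s' => ¬((n (A T) : ℝ) ≤ c * (n s' : ℝ))

lemma lt_of_mem_unreached {T : Finset S} {s : S} (hs : s ∈ unreached n c A T) :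
    c * n s < n (A T) :=
  not_le.mp (Finset.mem_filter.mp hs).2

lemma unreached_ssubset (hc : 1 ≤ c) {T : Finset S} (hT : A T ∈ T) :
    unreached n c A T ⊂ T :=
  (Finset.ssubset_iff_of_subset (Finset.filter_subset _ _)).mpr
    ⟨A T, hT, fun h =>
      (lt_of_mem_unreached n c A h).not_ge (le_mul_of_one_le_left (by positivity) hc)⟩

variable [DecidableEq S] (hc : 1 ≤ c) (hA : ∀ T : Finset S, T.Nonempty → A T ∈ T)

lemma anchors_of_nonempty {T : Finset S} (hT : T.Nonempty) :
    anchors n c A hc hA T = insert (A T) (anchors n c A hc hA (unreached n c A T)) := by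
  rw [anchors, dif_pos hT, unreached]

lemma anchors_of_not_nonempty {T : Finset S} (hT : ¬T.Nonempty) :
    anchors n c A hc hA T = ∅ := by
  rw [anchors, dif_neg hT]

lemma anchors_subset (T : Finset S) : anchors n c A hc hA T ⊆ T := by
  induction T using Finset.strongInduction with
  | _ T ih =>
    by_cases hT : T.Nonempty
    · rw [anchors_of_nonempty n c A hc hA hT]
      exact Finset.insert_subset (hA T hT)
        ((ih _ (unreached_ssubset n c A hc (hA T hT))).trans (Finset.filter_subset _ _))
    · simp [anchors_of_not_nonempty n c A hc hA hT]

theorem anchors_pairwise_separated (T : Finset S) :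
    (anchors n c A hc hA T : Set S).Pairwise fun a a' => c * n a < n a' ∨ c * n a' < n a := by
  induction T using Finset.strongInduction with
  | _ T ih =>
    by_cases hT : T.Nonempty
    · rw [anchors_of_nonempty n c A hc hA hT, Finset.coe_insert, Set.pairwise_insert]
      refine ⟨ih _ (unreached_ssubset n c A hc (hA T hT)), fun a' ha' _ => ?_⟩
      have h := lt_of_mem_unreached n c A (anchors_subset n c A hc hA _ ha')
      exact ⟨Or.inr h, Or.inl h⟩
    · simp [anchors_of_not_nonempty n c A hc hA hT]

end Anchors

theorem stmt_11_general {S : Type*} [Fintype S] [DecidableEq S]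
    (n : S → ℕ)
    (c : ℝ) (hc : 1 ≤ c)
    (A : Finset S → S) (hA : ∀ T : Finset S, T.Nonempty → A T ∈ T) :
    ∀ a ∈ anchors n c A hc hA Finset.univ, ∀ a' ∈ anchors n c A hc hA Finset.univ,
      a ≠ a' → ∀ y : ℕ,
        ¬((n a ≤ y ∧ (y : ℝ) ≤ c * (n a : ℝ)) ∧
          (n a' ≤ y ∧ (y : ℝ) ≤ c * (n a' : ℝ))) := by
  rintro a ha a' ha' hne y ⟨⟨hay, hya⟩, ⟨ha'y, hya'⟩⟩
  have hay : (n a : ℝ) ≤ y := by exact_mod_cast hay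
  have ha'y : (n a' : ℝ) ≤ y := by exact_mod_cast ha'y
  rcases anchors_pairwise_separated n c A hc hA Finset.univ ha ha' hne with h | h <;> linarith

/-- distinct anchors have disjoint constraint intervals: for distinct
`a, a' ∈ anchors(S)`, no `y ∈ ℕ` satisfies both `n a ≤ y ≤ c·n a` and
`n a' ≤ y ≤ c·n a'`. -/
theorem stmt_11 {S : Type*} [Fintype S] [DecidableEq S] [Nonempty S]
    (n : S → ℕ) (hn : ∀ s, 1 ≤ n s)
    (p : S → ℝ) (hp : ∀ s, 0 ≤ p s) (hsum : ∑ s, p s = 1)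
    (c : ℝ) (hc : 1 ≤ c)
    (A : Finset S → S) (hA : ∀ T : Finset S, T.Nonempty → A T ∈ T)
    (hAmax : ∀ T : Finset S, T.Nonempty → ∀ s ∈ T, n s ≤ n (A T)) :
    ∀ a ∈ anchors n c A hc hA Finset.univ, ∀ a' ∈ anchors n c A hc hA Finset.univ,
      a ≠ a' → ∀ y : ℕ,
        ¬((n a ≤ y ∧ (y : ℝ) ≤ c * (n a : ℝ)) ∧
          (n a' ≤ y ∧ (y : ℝ) ≤ c * (n a' : ℝ))) :=
  stmt_11_general n c hc A hA
end

section
/- Assume p(s) > 0 for every s ∈ S. Let q_Z be the randomized padding scheme induced by the anchor scheme Z, i.e., q_Z(s,y) = 1 if y = Z(s) and 0 otherwise. Then q_Z is a valid randomized padding scheme with I_∞(q_Z) = log₂ |anchors(S)|, and every valid randomized padding scheme q satisfies I_∞(q) ≥ log₂ |anchors(S)|; hence the anchor scheme minimizes I_∞ over all valid randomized padding schemes. -/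
/-!
Distinct anchors `a, b` are `c`-separated (`c·n a < n b` or `c·n b < n a`), so their windows
`[n a, c·n a]` of admissible padded sizes are disjoint. A valid `q` puts all the mass of `q a ·`
inside the window of `a`, hence `∑_y max_s q s y ≥ |anchors S|`. For a deterministic scheme the
sum `∑_y max_s q s y` counts the padded sizes in use, and those of the anchor scheme are exactly
the sizes of the anchors.
-/

section PaddingSchemes

open Finset

variable {ι : Type*} [Fintype ι]

lemma iSup_ite_eq_ite_mem_image (f : ι → ℕ) (y : ℕ) :
    ⨆ s, (if y = f s then (1 : ℝ) else 0) = if y ∈ univ.image f then 1 else 0 := by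
  split_ifs with hy
  · obtain ⟨s, -, rfl⟩ := mem_image.mp hy
    refine le_antisymm (Real.iSup_le (fun _ => ?_) zero_le_one)
      (le_ciSup_of_le (Set.finite_range _).bddAbove s (by simp))
    split_ifs <;> norm_num
  · have hne : ∀ s, y ≠ f s := fun s h => hy (mem_image.mpr ⟨s, mem_univ s, h.symm⟩)
    simp only [hne, if_false, Real.iSup_const_zero]

lemma tsum_iSup_ite_eq_card_image (f : ι → ℕ) :
    ∑' y, ⨆ s, (if y = f s then (1 : ℝ) else 0) = (univ.image f).card := by
  simp_rw [iSup_ite_eq_ite_mem_image]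
  rw [tsum_eq_sum (s := univ.image f) fun y hy => if_neg hy, sum_boole, filter_mem_eq_inter,
    inter_self]

lemma card_le_tsum_iSup (q : ι → ℕ → ℝ) (hq0 : ∀ s y, 0 ≤ q s y)
    (hq1 : ∀ s, ∑' y, q s y = 1) (K : Finset ι) (I : ι → Finset ℕ)
    (hdisj : (K : Set ι).PairwiseDisjoint I) (hsupp : ∀ s ∈ K, ∀ y ∉ I s, q s y = 0) :
    (K.card : ℝ) ≤ ∑' y, ⨆ s, q s y := by
  have hle : ∀ s y, q s y ≤ ⨆ s, q s y := fun s y =>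
    le_ciSup (f := fun s => q s y) (Set.finite_range _).bddAbove s
  have hsup0 : ∀ y, 0 ≤ ⨆ s, q s y := fun y => Real.iSup_nonneg fun s => hq0 s y
  have hsummable : Summable fun y => ⨆ s, q s y := by
    have hqs : ∀ s, Summable (q s) := fun s => by
      by_contra h
      simpa [tsum_eq_zero_of_not_summable h] using hq1 s
    refine (summable_sum fun s _ => hqs s).of_nonneg_of_le hsup0 fun y =>
      Real.iSup_le (fun s => single_le_sum (fun s _ => hq0 s y) (mem_univ s))
        (sum_nonneg fun s _ => hq0 s y)
  have hmass : ∀ s ∈ K, 1 ≤ ∑ y ∈ I s, ⨆ s, q s y := fun s hs =>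
    calc (1 : ℝ) = ∑ y ∈ I s, q s y := by rw [← hq1 s, tsum_eq_sum (hsupp s hs)]
      _ ≤ _ := sum_le_sum fun y _ => hle s y
  calc (K.card : ℝ) = ∑ _ ∈ K, (1 : ℝ) := by simp
    _ ≤ ∑ s ∈ K, ∑ y ∈ I s, ⨆ s, q s y := sum_le_sum hmass
    _ = ∑ y ∈ K.biUnion I, ⨆ s, q s y := (sum_biUnion hdisj).symm
    _ ≤ ∑' y, ⨆ s, q s y := hsummable.sum_le_tsum _ fun y _ => hsup0 y

end PaddingSchemes

section Windows

variable {S : Type*} {n : S → ℕ} {c : ℝ}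

lemma natCast_le_mul_of_one_le (hc : 1 ≤ c) (m : ℕ) : (m : ℝ) ≤ c * m :=
  le_mul_of_one_le_left (Nat.cast_nonneg m) hc

lemma disjoint_Icc_floor_of_lt {a b k : ℕ} {x : ℝ} (hx : 0 ≤ x) (h : x < b) :
    Disjoint (Finset.Icc a ⌊x⌋₊) (Finset.Icc b k) := by
  have hfloor : ⌊x⌋₊ < b := (Nat.floor_lt hx).mpr h
  rw [Finset.disjoint_left]
  intro y hya hyb
  rw [Finset.mem_Icc] at hya hyb
  omega

lemma ValidRand.eq_zero_of_notMem_Icc {q : S → ℕ → ℝ} (hq : ValidRand n c q) (hc : 0 ≤ c)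
    {s : S} {y : ℕ} (hy : y ∉ Finset.Icc (n s) ⌊c * n s⌋₊) : q s y = 0 := by
  rw [Finset.mem_Icc, not_and_or, not_le, not_le, Nat.floor_lt (by positivity)] at hy
  exact hq s y hy

lemma validRand_ite {Z : S → ℕ} (hZ : ∀ s, n s ≤ Z s ∧ (Z s : ℝ) ≤ c * n s) :
    ValidRand n c fun s y => if y = Z s then 1 else 0 := by
  intro s y hy
  refine if_neg ?_
  rintro rfl
  rcases hy with hy | hy
  · exact hy.not_ge (hZ s).1
  · exact hy.not_ge (hZ s).2

end Windows

namespace Anchors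

variable {S : Type*} (n : S → ℕ) (c : ℝ) (A : Finset S → S)

/-- `T \ reach(T)`, in the form in which it occurs in `anchors` and `anchorPad`. -/
noncomputable def unreached (T : Finset S) : Finset S :=
  T.filter fun s' => ¬((n (A T) : ℝ) ≤ c * (n s' : ℝ))

variable {n c A}

lemma mem_unreached {T : Finset S} {s : S} :
    s ∈ unreached n c A T ↔ s ∈ T ∧ c * (n s : ℝ) < n (A T) := by
  simp [unreached]

lemma unreached_subset (T : Finset S) : unreached n c A T ⊆ T :=
  Finset.filter_subset _ _

lemma reached_or_mem_unreached {T : Finset S} {s : S} (hs : s ∈ T) :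
    (n (A T) : ℝ) ≤ c * n s ∨ s ∈ unreached n c A T := by
  rw [mem_unreached]
  by_cases hreach : (n (A T) : ℝ) ≤ c * n s
  · exact Or.inl hreach
  · exact Or.inr ⟨hs, not_le.mp hreach⟩

variable (hc : 1 ≤ c) (hA : ∀ T : Finset S, T.Nonempty → A T ∈ T)
include hc hA

lemma unreached_ssubset {T : Finset S} (h : T.Nonempty) : unreached n c A T ⊂ T :=
  (Finset.ssubset_iff_of_subset (unreached_subset T)).mpr
    ⟨A T, hA T h, fun hmem => (mem_unreached.mp hmem).2.not_ge (natCast_le_mul_of_one_le hc _)⟩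

variable [DecidableEq S]

lemma anchors_empty : anchors n c A hc hA ∅ = ∅ := by
  rw [anchors, dif_neg Finset.not_nonempty_empty]

lemma anchors_of_nonempty {T : Finset S} (h : T.Nonempty) :
    anchors n c A hc hA T = insert (A T) (anchors n c A hc hA (unreached n c A T)) := by
  rw [anchors, dif_pos h, unreached]

lemma anchorPad_of_reached {T : Finset S} {s : S} (hs : s ∈ T)
    (hreach : (n (A T) : ℝ) ≤ c * n s) : anchorPad n c A hc hA T s = n (A T) := by
  rw [anchorPad, dif_pos ⟨s, hs⟩, if_pos ⟨hs, hreach⟩]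

lemma anchorPad_of_mem_unreached {T : Finset S} {s : S} (hs : s ∈ unreached n c A T) :
    anchorPad n c A hc hA T s = anchorPad n c A hc hA (unreached n c A T) s := by
  obtain ⟨hsT, hlt⟩ := mem_unreached.mp hs
  rw [anchorPad, dif_pos ⟨s, hsT⟩, if_neg fun h => h.2.not_gt hlt, unreached]

lemma anchors_subset (T : Finset S) : anchors n c A hc hA T ⊆ T := by
  induction T using Finset.strongInduction with
  | H T ih =>
    rcases T.eq_empty_or_nonempty with rfl | h
    · simp [anchors_empty]
    rw [anchors_of_nonempty hc hA h]
    exact Finset.insert_subset (hA T h)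
      ((ih _ (unreached_ssubset hc hA h)).trans (unreached_subset T))

lemma anchors_nonempty {T : Finset S} (h : T.Nonempty) : (anchors n c A hc hA T).Nonempty := by
  rw [anchors_of_nonempty hc hA h]
  exact Finset.insert_nonempty _ _

lemma anchors_separated (T : Finset S) :
    (anchors n c A hc hA T : Set S).Pairwise
      fun a b => c * (n a : ℝ) < n b ∨ c * (n b : ℝ) < n a := by
  induction T using Finset.strongInduction with
  | H T ih =>
    rcases T.eq_empty_or_nonempty with rfl | h
    · simp [anchors_empty]
    have below : ∀ x ∈ anchors n c A hc hA (unreached n c A T), c * (n x : ℝ) < n (A T) :=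
      fun x hx => (mem_unreached.mp (anchors_subset hc hA _ hx)).2
    rw [anchors_of_nonempty hc hA h, Finset.coe_insert]
    exact (ih _ (unreached_ssubset hc hA h)).insert
      fun b hb _ => ⟨Or.inr (below b hb), Or.inl (below b hb)⟩

lemma anchors_injOn (T : Finset S) : Set.InjOn n (anchors n c A hc hA T) := by
  intro a ha b hb hab
  by_contra hne
  rcases anchors_separated hc hA T ha hb hne with h | h
  · exact h.not_ge (hab ▸ natCast_le_mul_of_one_le hc _)
  · exact h.not_ge (hab ▸ natCast_le_mul_of_one_le hc _)

lemma image_anchorPad (T : Finset S) :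
    T.image (anchorPad n c A hc hA T) = (anchors n c A hc hA T).image n := by
  induction T using Finset.strongInduction with
  | H T ih =>
    rcases T.eq_empty_or_nonempty with rfl | h
    · simp [anchors_empty]
    rw [anchors_of_nonempty hc hA h, Finset.image_insert, ← ih _ (unreached_ssubset hc hA h)]
    ext y
    simp only [Finset.mem_insert, Finset.mem_image]
    constructor
    · rintro ⟨s, hs, rfl⟩
      rcases reached_or_mem_unreached hs with hreach | hs'
      · exact Or.inl (anchorPad_of_reached hc hA hs hreach)
      · exact Or.inr ⟨s, hs', (anchorPad_of_mem_unreached hc hA hs').symm⟩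
    · rintro (rfl | ⟨s, hs', rfl⟩)
      · exact ⟨A T, hA T h,
          anchorPad_of_reached hc hA (hA T h) (natCast_le_mul_of_one_le hc _)⟩
      · exact ⟨s, unreached_subset T hs', anchorPad_of_mem_unreached hc hA hs'⟩

lemma card_image_anchorPad (T : Finset S) :
    (T.image (anchorPad n c A hc hA T)).card = (anchors n c A hc hA T).card := by
  rw [image_anchorPad hc hA, Finset.card_image_of_injOn (anchors_injOn hc hA T)]

lemma card_anchors_le_tsum_iSup [Fintype S] (q : S → ℕ → ℝ) (hq0 : ∀ s y, 0 ≤ q s y)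
    (hq1 : ∀ s, ∑' y, q s y = 1) (hqv : ValidRand n c q) :
    ((anchors n c A hc hA Finset.univ).card : ℝ) ≤ ∑' y, ⨆ s, q s y := by
  have hc0 : 0 ≤ c := zero_le_one.trans hc
  refine card_le_tsum_iSup q hq0 hq1 _ (fun s => Finset.Icc (n s) ⌊c * n s⌋₊) ?_
    fun s _ y hy => hqv.eq_zero_of_notMem_Icc hc0 hy
  intro a ha b hb hab
  rcases anchors_separated hc hA _ ha hb hab with h | h
  · exact disjoint_Icc_floor_of_lt (by positivity) h
  · exact (disjoint_Icc_floor_of_lt (by positivity) h).symm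

variable (hAmax : ∀ T : Finset S, T.Nonempty → ∀ s ∈ T, n s ≤ n (A T))
include hAmax

lemma anchorPad_mem_window (T : Finset S) :
    ∀ s ∈ T, n s ≤ anchorPad n c A hc hA T s ∧
      (anchorPad n c A hc hA T s : ℝ) ≤ c * n s := by
  induction T using Finset.strongInduction with
  | H T ih =>
    intro s hs
    have h : T.Nonempty := ⟨s, hs⟩
    rcases reached_or_mem_unreached hs with hreach | hs'
    · rw [anchorPad_of_reached hc hA hs hreach]
      exact ⟨hAmax T h s hs, hreach⟩
    · rw [anchorPad_of_mem_unreached hc hA hs']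
      exact ih _ (unreached_ssubset hc hA h) s hs'

end Anchors

theorem stmt_12_general {S : Type*} [Fintype S] [DecidableEq S] [Nonempty S]
    (n : S → ℕ)
    (p : S → ℝ) (hp : ∀ s, 0 < p s)
    (c : ℝ) (hc : 1 ≤ c)
    (A : Finset S → S) (hA : ∀ T : Finset S, T.Nonempty → A T ∈ T)
    (hAmax : ∀ T : Finset S, T.Nonempty → ∀ s ∈ T, n s ≤ n (A T))
    (qZ : S → ℕ → ℝ)
    (hqZ : ∀ s y, qZ s y = if y = anchorPad n c A hc hA Finset.univ s then 1 else 0) :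
    ((∀ s y, 0 ≤ qZ s y) ∧ (∀ s, ∑' y, qZ s y = 1) ∧ ValidRand n c qZ) ∧
      Real.logb 2 (∑' y : ℕ, sSup ((fun s => qZ s y) '' {s : S | 0 < p s})) =
        Real.logb 2 ((anchors n c A hc hA Finset.univ).card : ℝ) ∧
      ∀ q : S → ℕ → ℝ, (∀ s y, 0 ≤ q s y) → (∀ s, ∑' y, q s y = 1) → ValidRand n c q →
        Real.logb 2 ((anchors n c A hc hA Finset.univ).card : ℝ) ≤
          Real.logb 2 (∑' y : ℕ, sSup ((fun s => q s y) '' {s : S | 0 < p s})) := by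
  open Anchors in
  have hsupport : {s : S | 0 < p s} = Set.univ := Set.eq_univ_of_forall hp
  simp only [hsupport, Set.image_univ, sSup_range]
  obtain rfl : qZ = fun s y => if y = anchorPad n c A hc hA Finset.univ s then 1 else 0 :=
    funext fun s => funext (hqZ s)
  have hwindow := fun s => anchorPad_mem_window hc hA hAmax Finset.univ s (Finset.mem_univ s)
  refine ⟨⟨fun s y => by positivity, fun s => tsum_ite_eq _ _, validRand_ite hwindow⟩, ?_,
    fun q hq0 hq1 hqv => ?_⟩
  · rw [tsum_iSup_ite_eq_card_image, card_image_anchorPad hc hA]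
  · have hpos : (0 : ℝ) < (anchors n c A hc hA Finset.univ).card := by
      exact_mod_cast (anchors_nonempty hc hA Finset.univ_nonempty).card_pos
    exact Real.logb_le_logb_of_le one_lt_two hpos
      (card_anchors_le_tsum_iSup hc hA q hq0 hq1 hqv)

/-- the randomized scheme `q_Z` induced by the anchor scheme `Z` is a
valid randomized padding scheme with `I_∞(q_Z) = log₂ |anchors(S)|`, and every valid
randomized padding scheme `q` has `I_∞(q) ≥ log₂ |anchors(S)|`; here
`I_∞(q) = log₂ Σ_y max_{s : p s > 0} q s y`. -/
theorem stmt_12 {S : Type*} [Fintype S] [DecidableEq S] [Nonempty S]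
    (n : S → ℕ) (hn : ∀ s, 1 ≤ n s)
    (p : S → ℝ) (hp : ∀ s, 0 < p s) (hsum : ∑ s, p s = 1)
    (c : ℝ) (hc : 1 ≤ c)
    (A : Finset S → S) (hA : ∀ T : Finset S, T.Nonempty → A T ∈ T)
    (hAmax : ∀ T : Finset S, T.Nonempty → ∀ s ∈ T, n s ≤ n (A T))
    (qZ : S → ℕ → ℝ)
    (hqZ : ∀ s y, qZ s y = if y = anchorPad n c A hc hA Finset.univ s then 1 else 0) :
    ((∀ s y, 0 ≤ qZ s y) ∧ (∀ s, ∑' y, qZ s y = 1) ∧ ValidRand n c qZ) ∧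
      Real.logb 2 (∑' y : ℕ, sSup ((fun s => qZ s y) '' {s : S | 0 < p s})) =
        Real.logb 2 ((anchors n c A hc hA Finset.univ).card : ℝ) ∧
      ∀ q : S → ℕ → ℝ, (∀ s y, 0 ≤ q s y) → (∀ s, ∑' y, q s y = 1) → ValidRand n c q →
        Real.logb 2 ((anchors n c A hc hA Finset.univ).card : ℝ) ≤
          Real.logb 2 (∑' y : ℕ, sSup ((fun s => q s y) '' {s : S | 0 < p s})) :=
  stmt_12_general n p hp c hc A hA hAmax qZ hqZ
end

section
/- Let s ∈ S be such that for every s' ∈ S with s' ≠ s, either c·n(s') < n(s) or c·n(s) < n(s'). Then for every valid randomized padding scheme q: Σ over y ∈ ℕ with n(s) ≤ y ≤ c·n(s) of q(s,y) equals 1, and q(s',y) = 0 for every s' ≠ s and every y ∈ ℕ with n(s) ≤ y ≤ c·n(s). In particular, a returned padded size in the range [n(s), c·n(s)] occurs exactly when the requested object is s. -/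
namespace ValidRand

variable {S : Type*} {n : S → ℕ} {c : ℝ} {q : S → ℕ → ℝ}

theorem ite_mem_interval_eq (hqv : ValidRand n c q) (s : S) (y : ℕ) :
    (if n s ≤ y ∧ (y : ℝ) ≤ c * (n s : ℝ) then q s y else 0) = q s y := by
  refine ite_eq_left_iff.mpr fun hy => (hqv s y ?_).symm
  rw [not_and_or, not_le, not_le] at hy
  exact hy

theorem tsum_ite_mem_interval_eq (hqv : ValidRand n c q) (s : S) :
    (∑' y : ℕ, if n s ≤ y ∧ (y : ℝ) ≤ c * (n s : ℝ) then q s y else 0) = ∑' y, q s y :=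
  tsum_congr (hqv.ite_mem_interval_eq s)

theorem eq_zero_of_interval_disjoint (hqv : ValidRand n c q) {s s' : S}
    (hdisj : c * (n s' : ℝ) < (n s : ℝ) ∨ c * (n s : ℝ) < (n s' : ℝ)) {y : ℕ}
    (hy₁ : n s ≤ y) (hy₂ : (y : ℝ) ≤ c * (n s : ℝ)) : q s' y = 0 := by
  refine hqv s' y ?_
  rcases hdisj with below | above
  · exact Or.inr (below.trans_le (by exact_mod_cast hy₁))
  · exact Or.inl (by exact_mod_cast hy₂.trans_lt above)

end ValidRand

theorem stmt_14_general {S : Type*}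
    (n : S → ℕ)
    (c : ℝ)
    (s : S)
    (hiso : ∀ s' : S, s' ≠ s →
      c * (n s' : ℝ) < (n s : ℝ) ∨ c * (n s : ℝ) < (n s' : ℝ))
    (q : S → ℕ → ℝ) (hq1 : ∀ s, ∑' y, q s y = 1)
    (hqv : ValidRand n c q) :
    (∑' y : ℕ, if n s ≤ y ∧ (y : ℝ) ≤ c * (n s : ℝ) then q s y else 0) = 1 ∧
      ∀ s' : S, s' ≠ s → ∀ y : ℕ, n s ≤ y → (y : ℝ) ≤ c * (n s : ℝ) → q s' y = 0 :=
  ⟨(hqv.tsum_ite_mem_interval_eq s).trans (hq1 s),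
    fun s' hs' _ hy₁ hy₂ => hqv.eq_zero_of_interval_disjoint (hiso s' hs') hy₁ hy₂⟩

/-- if the constraint interval of `s` is disjoint from that of every other
object (i.e. for every `s' ≠ s` either `c·n s' < n s` or `c·n s < n s'`), then for every
valid randomized padding scheme `q`, the total probability that `s` is padded to a size
in `[n s, c·n s]` is `1`, and `q s' y = 0` for every `s' ≠ s` and every `y` in that
range. -/
theorem stmt_14 {S : Type*} [Fintype S] [Nonempty S]
    (n : S → ℕ) (hn : ∀ s, 1 ≤ n s)
    (p : S → ℝ) (hp : ∀ s, 0 ≤ p s) (hsum : ∑ s, p s = 1)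
    (c : ℝ) (hc : 1 ≤ c)
    (s : S)
    (hiso : ∀ s' : S, s' ≠ s →
      c * (n s' : ℝ) < (n s : ℝ) ∨ c * (n s : ℝ) < (n s' : ℝ))
    (q : S → ℕ → ℝ) (hq0 : ∀ s y, 0 ≤ q s y) (hq1 : ∀ s, ∑' y, q s y = 1)
    (hqv : ValidRand n c q) :
    (∑' y : ℕ, if n s ≤ y ∧ (y : ℝ) ≤ c * (n s : ℝ) then q s y else 0) = 1 ∧
      ∀ s' : S, s' ≠ s → ∀ y : ℕ, n s ≤ y → (y : ℝ) ≤ c * (n s : ℝ) → q s' y = 0 :=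
  stmt_14_general n c s hiso q hq1 hqv
end
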